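/- arXiv:1805.12193 — 15 statements merged into one kernel-verified Lean document; each statement's English description precedes it below -/
import Mathlib

section
/- Let ≼ be a transitive relation on a set W and let φ : W → ℝ ∪ {±∞} be ≼-increasing. Define w₁ ≼_φ w₂ iff [w₁ = w₂, or (w₁ ≼ w₂ and φ(w₁) < φ(w₂))]. Then: (i) ≼_φ is a partial order (reflexive, transitive, antisymmetric) on W and φ is strictly ≼_φ-increasing; moreover ≼_φ equals ≼ ∪ Δ_W (the relation ≼ together with the diagonal) whenever φ is strictly ≼-increasing; (ii) if w̄ is a minimal element of W with respect to ≼_φ, then for every w' ∈ W with w' ≼ w̄ one has φ(w') = φ(w̄); (iii) if every ≼-decreasing sequence in W has a lower bound with respect to ≼, then every ≼_φ-decreasing sequence in W has a lower bound with respect to ≼_φ. -/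
/-!
Every step `w₁ ≼_φ w₂` with `w₁ ≠ w₂` is a `≼`-step along which `φ` strictly increases, so the
order properties of `≼_φ` follow from those of `≼` and `<`. For (iii), a `≼_φ`-decreasing sequence
is either eventually constant, and its eventual value is a lower bound, or it has a subsequence of
pairwise distinct consecutive terms; that subsequence is `≼`-decreasing with `φ` strictly
decreasing, so a `≼`-lower bound `v` of it satisfies `φ v < φ` of every term and is a
`≼_φ`-lower bound.
-/

section

variable {W β : Type*}

def inducedOrder [Preorder β] (r : W → W → Prop) (φ : W → β) (a b : W) : Prop :=
  a = b ∨ (r a b ∧ φ a < φ b)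

namespace inducedOrder

section Preorder

variable [Preorder β] {r : W → W → Prop} {φ : W → β} {a b : W}

theorem refl (a : W) : inducedOrder r φ a a := Or.inl rfl

theorem of_ne (h : inducedOrder r φ a b) (hne : a ≠ b) : r a b ∧ φ a < φ b :=
  h.resolve_left hne

theorem lt_of_ne (h : inducedOrder r φ a b) (hne : a ≠ b) : φ a < φ b := (h.of_ne hne).2

theorem transitive (hr : Transitive r) : Transitive (inducedOrder r φ) := by
  rintro a b c (rfl | ⟨hab, hφab⟩) (rfl | ⟨hbc, hφbc⟩)
  · exact refl a
  · exact Or.inr ⟨hbc, hφbc⟩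
  · exact Or.inr ⟨hab, hφab⟩
  · exact Or.inr ⟨hr hab hbc, hφab.trans hφbc⟩

theorem antiSymmetric : AntiSymmetric (inducedOrder r φ) := fun a b hab hba => by
  by_contra hne
  exact lt_asymm (hab.lt_of_ne hne) (hba.lt_of_ne (Ne.symm hne))

theorem iff_of_strictMono (hstrict : ∀ a b, r a b → a ≠ b → φ a < φ b) :
    inducedOrder r φ a b ↔ r a b ∨ a = b := by
  refine ⟨fun h => h.symm.imp_left And.left, ?_⟩
  rintro (hab | rfl)
  · by_cases hne : a = b
    · exact Or.inl hne
    · exact Or.inr ⟨hab, hstrict a b hab hne⟩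
  · exact refl a

theorem rel_of_le (hr : Transitive r) {w : ℕ → W}
    (hw : ∀ n, inducedOrder r φ (w (n + 1)) (w n)) {m n : ℕ} (hmn : m ≤ n) :
    inducedOrder r φ (w n) (w m) := by
  induction n, hmn using Nat.le_induction with
  | base => exact refl _
  | succ n _ ih => exact transitive hr (hw n) ih

theorem exists_lowerBound (hr : Transitive r) (hmono : ∀ a b, r a b → φ a ≤ φ b)
    (hAb : ∀ u : ℕ → W, (∀ n, r (u (n + 1)) (u n)) → ∃ v, ∀ n, r v (u n))
    {w : ℕ → W} (hw : ∀ n, inducedOrder r φ (w (n + 1)) (w n)) :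
    ∃ v, ∀ n, inducedOrder r φ v (w n) := by
  by_cases hmoves : ∀ N, ∃ n ≥ N, w n ≠ w N
  · choose next hnext_ge hnext_ne using hmoves
    have hnext_step : ∀ N, r (w (next N)) (w N) ∧ φ (w (next N)) < φ (w N) := fun N =>
      (rel_of_le hr hw (hnext_ge N)).of_ne (hnext_ne N)
    set g : ℕ → ℕ := fun i => next^[i] 0
    have hg_succ : ∀ i, g (i + 1) = next (g i) := fun i => Function.iterate_succ_apply' _ _ _
    have hg_mono : StrictMono g := strictMono_nat_of_lt_succ fun i => by
      rw [hg_succ]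
      exact (hnext_ge (g i)).lt_of_ne fun h => hnext_ne _ (congrArg w h.symm)
    obtain ⟨v, hv⟩ := hAb (w ∘ g) fun i => by
      simpa only [Function.comp, hg_succ] using (hnext_step (g i)).1
    refine ⟨v, fun m => transitive hr ?_ (rel_of_le hr hw (hg_mono.id_le m))⟩
    have hφ : φ (w (g (m + 1))) < φ (w (g m)) := by
      simpa only [hg_succ] using (hnext_step (g m)).2
    exact Or.inr ⟨hv m, (hmono _ _ (hv (m + 1))).trans_lt hφ⟩
  · push Not at hmoves
    obtain ⟨N, hN⟩ := hmoves
    refine ⟨w N, fun n => ?_⟩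
    rcases le_total n N with hnN | hNn
    · exact rel_of_le hr hw hnN
    · exact Or.inl (hN n hNn).symm

end Preorder

theorem eq_of_minimal [PartialOrder β] {r : W → W → Prop} {φ : W → β}
    (hmono : ∀ a b, r a b → φ a ≤ φ b) {wbar : W}
    (hmin : ∀ w, inducedOrder r φ w wbar → w = wbar) {w' : W} (hw' : r w' wbar) :
    φ w' = φ wbar := by
  by_contra hne
  exact hne (congrArg φ (hmin w' (Or.inr ⟨hw', (hmono _ _ hw').lt_of_ne hne⟩)))

end inducedOrder

end

/-- Lemma on the order `≼_φ` induced by a transitive relation `≼` and a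
`≼`-increasing function `φ : W → ℝ ∪ {±∞}`. -/
theorem statement1 {W : Type*} (r : W → W → Prop) (htrans : Transitive r)
    (φ : W → EReal) (hmono : ∀ a b, r a b → φ a ≤ φ b)
    (rφ : W → W → Prop)
    (hrφ : ∀ a b, rφ a b ↔ (a = b ∨ (r a b ∧ φ a < φ b))) :
    -- (i) ≼_φ is a partial order and φ is strictly ≼_φ-increasing;
    -- moreover ≼_φ = ≼ ∪ Δ_W when φ is strictly ≼-increasing
    ((∀ a, rφ a a) ∧ Transitive rφ ∧ AntiSymmetric rφ ∧
      (∀ a b, rφ a b → a ≠ b → φ a < φ b) ∧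
      ((∀ a b, r a b → a ≠ b → φ a < φ b) → ∀ a b, rφ a b ↔ (r a b ∨ a = b)))
    ∧
    -- (ii) if wbar is minimal wrt ≼_φ then any w' ≼ wbar has the same φ-value
    (∀ wbar : W, (∀ w, rφ w wbar → w = wbar) → ∀ w', r w' wbar → φ w' = φ wbar)
    ∧
    -- (iii) condition (Ab) passes from ≼ to ≼_φ
    ((∀ w : ℕ → W, (∀ n, r (w (n + 1)) (w n)) → ∃ v, ∀ n, r v (w n)) →
      (∀ w : ℕ → W, (∀ n, rφ (w (n + 1)) (w n)) → ∃ v, ∀ n, rφ v (w n))) := by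
  obtain rfl : rφ = inducedOrder r φ := funext fun a => funext fun b => propext (hrφ a b)
  exact ⟨⟨inducedOrder.refl, inducedOrder.transitive htrans, inducedOrder.antiSymmetric,
      fun _ _ => inducedOrder.lt_of_ne, fun hstrict _ _ => inducedOrder.iff_of_strictMono hstrict⟩,
    fun _ hmin _ => inducedOrder.eq_of_minimal hmono hmin,
    fun hAb _ => inducedOrder.exists_lowerBound htrans hmono hAb⟩
end

section
/- (Brezis–Browder principle.) Let ≼ be a transitive relation on a nonempty set W such that every ≼-decreasing sequence in W has a lower bound, and let φ : W → ℝ be a lower bounded ≼-increasing function. Then: (i) for every w ∈ W with S_≼(w) ≠ ∅ there exists w̄ ∈ S_≼(w) such that φ(w') = φ(w̄) for all w' ∈ S_≼(w̄); (ii) if moreover φ is strictly ≼-increasing, then ≼ is antisymmetric and for every w ∈ W with S_≼(w) ≠ ∅ there exists w̄ ∈ S_≼(w) such that S_≼(w̄) ⊆ {w̄}. -/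
/-! Write `m u = inf φ(S(u))`. If every `v` had some `x ≼ v` with `φ x < φ v`, every `S(u)` would
be nonempty and one could choose a decreasing sequence with `φ(wₙ₊₁) < m(wₙ) + 1/(n+1)`. For a
lower bound `v` and any `x ≼ v` this squeezes `m(wₙ) ≤ φ x ≤ φ v ≤ φ(wₙ₊₁)`, so `φ x = φ v`.
Part (i) is this argument run inside `S(w)`, and (ii) follows since strict monotonicity turns
`φ x = φ v` into `x = v`. -/

open Set

section BrezisBrowder

variable {W : Type*} {r : W → W → Prop} {φ : W → ℝ}

lemma exists_rel_lt_sInf_add {u : W} (hu : ∃ x, r x u) {ε : ℝ} (hε : 0 < ε) :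
    ∃ x, r x u ∧ φ x < sInf (φ '' {x | r x u}) + ε := by
  obtain ⟨x, hx⟩ := hu
  obtain ⟨_, ⟨y, hy, rfl⟩, hlt⟩ := exists_lt_of_csInf_lt (s := φ '' {x | r x u})
    ⟨φ x, x, hx, rfl⟩ (lt_add_of_pos_right _ hε)
  exact ⟨y, hy, hlt⟩

lemma sInf_le_of_rel (hφ : BddBelow (range φ)) {u x : W} (hx : r x u) :
    sInf (φ '' {x | r x u}) ≤ φ x :=
  csInf_le (hφ.mono (image_subset_range _ _)) ⟨x, hx, rfl⟩

theorem exists_forall_rel_apply_eq [Nonempty W] [IsTrans W r]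
    (hAb : ∀ w : ℕ → W, (∀ n, r (w (n + 1)) (w n)) → ∃ v, ∀ n, r v (w n))
    (hφ : BddBelow (range φ)) (hmono : ∀ a b, r a b → φ a ≤ φ b) :
    ∃ v, ∀ x, r x v → φ x = φ v := by
  by_contra! hdescent
  let m : W → ℝ := fun u => sInf (φ '' {x | r x u})
  have hstep : ∀ (u : W) (n : ℕ), ∃ x, r x u ∧ φ x < m u + 1 / (n + 1) := fun u _ =>
    exists_rel_lt_sInf_add ((hdescent u).imp fun _ => And.left) Nat.one_div_pos_of_nat
  choose g hgr hgφ using hstep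
  let s : ℕ → W := fun n => Nat.rec (Classical.arbitrary W) (fun n u => g u n) n
  obtain ⟨v, hv⟩ := hAb s fun n => hgr (s n) n
  obtain ⟨x, hxv, hne⟩ := hdescent v
  have hvx : φ v ≤ φ x := le_of_forall_pos_le_add fun ε hε => by
    obtain ⟨n, hn⟩ := exists_nat_one_div_lt hε
    calc φ v ≤ φ (s (n + 1)) := hmono _ _ (hv (n + 1))
      _ ≤ m (s n) + 1 / (n + 1) := (hgφ (s n) n).le
      _ ≤ φ x + ε := add_le_add (sInf_le_of_rel hφ (_root_.trans hxv (hv n))) hn.le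
  exact hne ((hmono _ _ hxv).antisymm hvx)

theorem exists_rel_forall_rel_apply_eq [IsTrans W r]
    (hAb : ∀ w : ℕ → W, (∀ n, r (w (n + 1)) (w n)) → ∃ v, ∀ n, r v (w n))
    (hφ : BddBelow (range φ)) (hmono : ∀ a b, r a b → φ a ≤ φ b) {w : W} (hw : ∃ w', r w' w) :
    ∃ wbar, r wbar w ∧ ∀ w', r w' wbar → φ w' = φ wbar := by
  have : Nonempty {u // r u w} := nonempty_subtype.2 hw
  have : IsTrans {u // r u w} (fun a b => r a b) := ⟨fun _ _ _ => _root_.trans⟩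
  obtain ⟨⟨v, hvw⟩, hv⟩ :=
    exists_forall_rel_apply_eq (r := fun a b : {u // r u w} => r a b) (φ := φ ∘ Subtype.val)
      (fun s hs => let ⟨v, hv⟩ := hAb (fun n => s n) hs; ⟨⟨v, _root_.trans (hv 0) (s 0).2⟩, hv⟩)
      (hφ.mono (range_comp_subset_range _ _)) (fun a b => hmono a b)
  exact ⟨v, hvw, fun w' hw' => hv ⟨w', _root_.trans hw' hvw⟩ hw'⟩

variable (hstrict : ∀ a b, r a b → a ≠ b → φ a < φ b)
include hstrict

lemma antisymm_of_rel_strictMono : Std.Antisymm r := ⟨fun a b hab hba =>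
  by_contra fun hne => lt_asymm (hstrict a b hab hne) (hstrict b a hba (Ne.symm hne))⟩

lemma eq_of_rel_of_forall_rel_apply_eq {v : W} (hv : ∀ x, r x v → φ x = φ v) :
    ∀ x, r x v → x = v := fun x hx =>
  by_contra fun hne => (hstrict x v hx hne).ne (hv x hx)

end BrezisBrowder

theorem statement2_general {W : Type*} (r : W → W → Prop) (htrans : Transitive r)
    (hAb : ∀ w : ℕ → W, (∀ n, r (w (n + 1)) (w n)) → ∃ v, ∀ n, r v (w n))
    (φ : W → ℝ) (hbdd : ∃ c : ℝ, ∀ w, c ≤ φ w)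
    (hmono : ∀ a b, r a b → φ a ≤ φ b) :
    -- (i)
    (∀ w : W, (∃ w', r w' w) →
      ∃ wbar, r wbar w ∧ ∀ w', r w' wbar → φ w' = φ wbar)
    ∧
    -- (ii)
    ((∀ a b, r a b → a ≠ b → φ a < φ b) →
      AntiSymmetric r ∧
        ∀ w : W, (∃ w', r w' w) →
          ∃ wbar, r wbar w ∧ ∀ w', r w' wbar → w' = wbar) := by
  have : IsTrans W r := ⟨fun _ _ _ => @htrans _ _ _⟩
  have hφ : BddBelow (range φ) := let ⟨c, hc⟩ := hbdd; ⟨c, forall_mem_range.2 hc⟩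
  have part_i := fun w => exists_rel_forall_rel_apply_eq hAb hφ hmono (w := w)
  refine ⟨part_i, fun hstrict => ⟨(antisymm_of_rel_strictMono hstrict).antisymm, fun w hw => ?_⟩⟩
  obtain ⟨wbar, hwbar, hconst⟩ := part_i w hw
  exact ⟨wbar, hwbar, eq_of_rel_of_forall_rel_apply_eq hstrict hconst⟩

/-- The Brezis–Browder principle. `S_≼(w) = {w' | r w' w}`; membership
`w' ∈ S_≼(w)` is written `r w' w`. -/
theorem statement2 {W : Type*} [Nonempty W] (r : W → W → Prop) (htrans : Transitive r)
    (hAb : ∀ w : ℕ → W, (∀ n, r (w (n + 1)) (w n)) → ∃ v, ∀ n, r v (w n))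
    (φ : W → ℝ) (hbdd : ∃ c : ℝ, ∀ w, c ≤ φ w)
    (hmono : ∀ a b, r a b → φ a ≤ φ b) :
    -- (i)
    (∀ w : W, (∃ w', r w' w) →
      ∃ wbar, r wbar w ∧ ∀ w', r w' wbar → φ w' = φ wbar)
    ∧
    -- (ii)
    ((∀ a b, r a b → a ≠ b → φ a < φ b) →
      AntiSymmetric r ∧
        ∀ w : W, (∃ w', r w' w) →
          ∃ wbar, r wbar w ∧ ∀ w', r w' wbar → w' = wbar) :=
  statement2_general r htrans hAb φ hbdd hmono
end

section
/- (Extended Brezis–Browder principle.) Let ≼ be a transitive relation on a nonempty set W such that every ≼-decreasing sequence in W has a lower bound, and let φ : W → ℝ ∪ {±∞} be a ≼-increasing function. Then: (i) for every w ∈ W with S_≼(w) ≠ ∅ there exists w̄ ∈ S_≼(w) such that φ(w') = φ(w̄) for all w' ∈ S_≼(w̄); (ii) if moreover φ is strictly ≼-increasing, then ≼ is antisymmetric and for every w ∈ W with S_≼(w) ≠ ∅ there exists w̄ ∈ S_≼(w) such that S_≼(w̄) ⊆ {w̄}. -/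
/-!
Composing `φ` with a strictly increasing bounded map `EReal → ℝ` reduces (i) to a real-valued
`ψ` that is bounded below. If no `w̄ ∈ S(w)` had `ψ` constant on `S(w̄)`, one could pick
`u₀ ≽ u₁ ≽ ⋯` in `S(w)` with `ψ (uₙ₊₁) ≤ inf ψ(S(uₙ)) + 2⁻ⁿ`. A lower bound `v` of this chain lies
in every `S(uₙ)`, so each `x ∈ S(v)` has `ψ v ≤ ψ (uₙ₊₁) ≤ ψ x + 2⁻ⁿ` for all `n`, whence
`ψ x = ψ v`, a contradiction. Part (ii) follows from (i) since a strictly increasing `φ` is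
injective along `≼`.
-/

open Set Filter Topology

lemma EReal.exists_strictMono_nonneg_real : ∃ g : EReal → ℝ, StrictMono g ∧ ∀ x, 0 ≤ g x := by
  refine ⟨fun x => (ENNReal.orderIsoIicOneBirational (EReal.expOrderIso x) : ENNReal).toReal,
    fun a b hab => ENNReal.toReal_strict_mono ?_ ?_, fun _ => ENNReal.toReal_nonneg⟩
  · exact ne_top_of_le_ne_top ENNReal.one_ne_top (ENNReal.orderIsoIicOneBirational _).2
  · exact ENNReal.orderIsoIicOneBirational.strictMono (EReal.expOrderIso.strictMono hab)

section BrezisBrowder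

variable {W : Type*} {r : W → W → Prop}

lemma exists_seq_almost_minimizing (htrans : Transitive r) (ψ : W → ℝ) (hψ : BddBelow (range ψ))
    {w u₀ : W} (hu₀ : r u₀ w) (hne : ∀ u, r u w → ∃ x, r x u) :
    ∃ u : ℕ → W, r (u 0) w ∧ (∀ n, r (u (n + 1)) (u n)) ∧
      ∀ n x, r x (u n) → ψ (u (n + 1)) ≤ ψ x + (1 / 2) ^ n := by
  have step : ∀ (n : ℕ) (u : W), r u w →
      ∃ y, r y u ∧ ∀ x, r x u → ψ y ≤ ψ x + (1 / 2) ^ n := by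
    intro n u hu
    have hS : (ψ '' {x | r x u}).Nonempty := Set.Nonempty.image ψ (hne u hu)
    obtain ⟨_, ⟨y, hy, rfl⟩, hlt⟩ := exists_lt_of_csInf_lt hS
      (lt_add_of_pos_right (sInf (ψ '' {x | r x u})) (by positivity : (0 : ℝ) < (1 / 2) ^ n))
    refine ⟨y, hy, fun x hx => hlt.le.trans ?_⟩
    gcongr
    exact csInf_le (hψ.mono (image_subset_range _ _)) (mem_image_of_mem ψ hx)
  choose! next hnext_rel hnext_le using step
  let u : ℕ → W := fun n => Nat.rec u₀ next n
  have hu : ∀ n, r (u n) w := by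
    intro n
    induction n with
    | zero => exact hu₀
    | succ n ih => exact htrans (hnext_rel n (u n) ih) ih
  exact ⟨u, hu 0, fun n => hnext_rel n (u n) (hu n), fun n => hnext_le n (u n) (hu n)⟩

theorem exists_forall_eq_of_bddBelow (htrans : Transitive r)
    (hAb : ∀ w : ℕ → W, (∀ n, r (w (n + 1)) (w n)) → ∃ v, ∀ n, r v (w n))
    (ψ : W → ℝ) (hψ : BddBelow (range ψ)) (hmono : ∀ a b, r a b → ψ a ≤ ψ b)
    {w : W} (hw : ∃ w', r w' w) :
    ∃ wbar, r wbar w ∧ ∀ w', r w' wbar → ψ w' = ψ wbar := by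
  by_contra! hcon
  obtain ⟨u₀, hu₀⟩ := hw
  have hne : ∀ u, r u w → ∃ x, r x u := fun u hu => (hcon u hu).imp fun _ => And.left
  obtain ⟨u, hu0, hdec, halmost⟩ := exists_seq_almost_minimizing htrans ψ hψ hu₀ hne
  obtain ⟨v, hv⟩ := hAb u hdec
  obtain ⟨x, hxv, hxv_ne⟩ := hcon v (htrans (hv 0) hu0)
  have hlim : Tendsto (fun n : ℕ => ψ x + (1 / 2 : ℝ) ^ n) atTop (𝓝 (ψ x)) := by
    simpa using tendsto_const_nhds.add
      (tendsto_pow_atTop_nhds_zero_of_lt_one (by norm_num : (0 : ℝ) ≤ 1 / 2) (by norm_num))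
  have hvx : ψ v ≤ ψ x := ge_of_tendsto' hlim fun n =>
    (hmono _ _ (hv (n + 1))).trans (halmost n x (htrans hxv (hv n)))
  exact hxv_ne (le_antisymm (hmono _ _ hxv) hvx)

theorem exists_forall_eq_of_ereal (htrans : Transitive r)
    (hAb : ∀ w : ℕ → W, (∀ n, r (w (n + 1)) (w n)) → ∃ v, ∀ n, r v (w n))
    (φ : W → EReal) (hmono : ∀ a b, r a b → φ a ≤ φ b) {w : W} (hw : ∃ w', r w' w) :
    ∃ wbar, r wbar w ∧ ∀ w', r w' wbar → φ w' = φ wbar := by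
  obtain ⟨g, hg, hg0⟩ := EReal.exists_strictMono_nonneg_real
  obtain ⟨wbar, hwbar, hconst⟩ := exists_forall_eq_of_bddBelow htrans hAb (g ∘ φ)
    ⟨0, forall_mem_range.2 fun _ => hg0 _⟩ (fun a b hab => hg.monotone (hmono a b hab)) hw
  exact ⟨wbar, hwbar, fun w' hw' => hg.injective (hconst w' hw')⟩

end BrezisBrowder

theorem statement3_general {W : Type*} (r : W → W → Prop) (htrans : Transitive r)
    (hAb : ∀ w : ℕ → W, (∀ n, r (w (n + 1)) (w n)) → ∃ v, ∀ n, r v (w n))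
    (φ : W → EReal) (hmono : ∀ a b, r a b → φ a ≤ φ b) :
    -- (i)
    (∀ w : W, (∃ w', r w' w) →
      ∃ wbar, r wbar w ∧ ∀ w', r w' wbar → φ w' = φ wbar)
    ∧
    -- (ii)
    ((∀ a b, r a b → a ≠ b → φ a < φ b) →
      AntiSymmetric r ∧
        ∀ w : W, (∃ w', r w' w) →
          ∃ wbar, r wbar w ∧ ∀ w', r w' wbar → w' = wbar) := by
  have hi := fun w => exists_forall_eq_of_ereal htrans hAb φ hmono (w := w)
  refine ⟨hi, fun hstrict => ⟨fun a b hab hba => ?_, fun w hw => ?_⟩⟩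
  · by_contra hne
    exact (hstrict a b hab hne).not_gt (hstrict b a hba (Ne.symm hne))
  · obtain ⟨wbar, hwbar, hconst⟩ := hi w hw
    refine ⟨wbar, hwbar, fun w' hw' => ?_⟩
    by_contra hne
    exact (hstrict w' wbar hw' hne).ne (hconst w' hw')

/-- The extended Brezis–Browder principle, for `φ : W → ℝ ∪ {±∞}`. -/
theorem statement3 {W : Type*} [Nonempty W] (r : W → W → Prop) (htrans : Transitive r)
    (hAb : ∀ w : ℕ → W, (∀ n, r (w (n + 1)) (w n)) → ∃ v, ∀ n, r v (w n))
    (φ : W → EReal) (hmono : ∀ a b, r a b → φ a ≤ φ b) :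
    -- (i)
    (∀ w : W, (∃ w', r w' w) →
      ∃ wbar, r wbar w ∧ ∀ w', r w' wbar → φ w' = φ wbar)
    ∧
    -- (ii)
    ((∀ a b, r a b → a ≠ b → φ a < φ b) →
      AntiSymmetric r ∧
        ∀ w : W, (∃ w', r w' w) →
          ∃ wbar, r wbar w ∧ ∀ w', r w' wbar → w' = wbar) :=
  statement3_general r htrans hAb φ hmono
end

section
/- Let ≼ be a transitive relation on a nonempty set W and let φ : W → ℝ be a lower bounded ≼-increasing function. Assume condition (AQ): every strictly ≼-decreasing sequence (w_n)_{n≥1} ⊆ W such that (φ(w_n))_{n≥1} is strictly decreasing and φ(w_{n+1}) − inf{φ(v) | v ≼ w_n} → 0 has a lower bound with respect to ≼. Then: (i) for every w ∈ W with S_≼(w) ≠ ∅ there exists w̄ ∈ S_≼(w) such that φ(w') = φ(w̄) for all w' ∈ S_≼(w̄); (ii) if moreover φ is strictly ≼-increasing, then for every w ∈ W with S_≼(w) ≠ ∅ there exists w̄ ∈ S_≼(w) such that S_≼(w̄) ⊆ {w̄}. -/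
/-!
Suppose (i) fails below `w`: every `u ≼ w` has some `v ≼ u` with `φ v < φ u`. Then from any
`u ≼ w` one can step down to a `v ≼ u` with `φ v < φ u` and `φ v` within `1/(n+1)` of
`inf φ(S(u))`. Iterating gives a sequence to which (AQ) applies, so it has a lower bound `v ≼ w`.
Every `w' ≼ v` lies below all terms, so `φ w' ≥ inf φ(S(w_n)) > φ(w_{n+1}) - 1/(n+1) ≥ φ v - 1/(n+1)`
for all `n`, so `φ w' ≥ φ v` for every `w' ≼ v`, contradicting the assumption at `v`.
Part (ii) follows from (i), since a strictly increasing `φ` cannot be constant on `S(w̄) ∋ w' ≠ w̄`.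
-/

namespace BrezisBrowder

variable {W : Type*} {r : W → W → Prop} {φ : W → ℝ}

/-- `inf φ(S_≼(u))` (a junk `0` when `S_≼(u) = ∅`). -/
noncomputable def infBelow (r : W → W → Prop) (φ : W → ℝ) (u : W) : ℝ :=
  sInf (φ '' {v | r v u})

lemma infBelow_le (hbdd : BddBelow (Set.range φ)) {u v : W} (hv : r v u) :
    infBelow r φ u ≤ φ v :=
  csInf_le (hbdd.mono (Set.image_subset_range _ _)) ⟨v, hv, rfl⟩

lemma exists_lt_and_lt_infBelow_add (hbdd : BddBelow (Set.range φ)) {u v : W} (hv : r v u)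
    (hlt : φ v < φ u) {ε : ℝ} (hε : 0 < ε) :
    ∃ v', r v' u ∧ φ v' < φ u ∧ φ v' < infBelow r φ u + ε := by
  have hinf : infBelow r φ u < min (φ u) (infBelow r φ u + ε) :=
    lt_min ((infBelow_le hbdd hv).trans_lt hlt) (lt_add_of_pos_right _ hε)
  obtain ⟨_, ⟨v', hv', rfl⟩, hv'lt⟩ := exists_lt_of_csInf_lt (⟨φ v, v, hv, rfl⟩ : (φ '' {v | r v u}).Nonempty) hinf
  exact ⟨v', hv', hv'lt.trans_le (min_le_left _ _), hv'lt.trans_le (min_le_right _ _)⟩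

lemma exists_seq_of_forall_exists {α : Type*} {P : α → Prop} {R : ℕ → α → α → Prop}
    (hstep : ∀ n a, P a → ∃ b, P b ∧ R n a b) {a₀ : α} (h₀ : P a₀) :
    ∃ s : ℕ → α, ∀ n, P (s n) ∧ R n (s n) (s (n + 1)) := by
  choose! next hnextP hnextR using hstep
  let s : ℕ → α := fun n => Nat.rec a₀ (fun k a => next k a) n
  have hsP : ∀ n, P (s n) := fun n => by
    induction n with
    | zero => exact h₀
    | succ k ih => exact hnextP k _ ih
  exact ⟨s, fun n => ⟨hsP n, hnextR n _ (hsP n)⟩⟩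

lemma tendsto_sub_infBelow_of_lt_add (hbdd : BddBelow (Set.range φ)) {s : ℕ → W}
    (hdesc : ∀ n, r (s (n + 1)) (s n))
    (hnear : ∀ n, φ (s (n + 1)) < infBelow r φ (s n) + 1 / (n + 1)) :
    Filter.Tendsto (fun n => φ (s (n + 1)) - infBelow r φ (s n)) Filter.atTop (nhds 0) :=
  squeeze_zero (fun n => sub_nonneg.2 (infBelow_le hbdd (hdesc n)))
    (fun n => (sub_lt_iff_lt_add'.2 (hnear n)).le) tendsto_one_div_add_atTop_nhds_zero_nat

lemma le_of_lowerBound_of_lt_infBelow_add [IsTrans W r]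
    (hbdd : BddBelow (Set.range φ)) (hmono : ∀ a b, r a b → φ a ≤ φ b) {s : ℕ → W}
    (hnear : ∀ n, φ (s (n + 1)) < infBelow r φ (s n) + 1 / (n + 1))
    {v : W} (hv : ∀ n, r v (s n)) {w' : W} (hw' : r w' v) : φ v ≤ φ w' := by
  by_contra! hlt
  obtain ⟨n, hn⟩ := exists_nat_one_div_lt (sub_pos.2 hlt)
  have := calc
    φ v ≤ φ (s (n + 1)) := hmono _ _ (hv (n + 1))
    _ < infBelow r φ (s n) + 1 / (n + 1) := hnear n
    _ ≤ φ w' + 1 / (n + 1) := by gcongr; exact infBelow_le hbdd (trans_of r hw' (hv n))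
  linarith

theorem exists_phi_eq_below [IsTrans W r] (hbdd : BddBelow (Set.range φ))
    (hmono : ∀ a b, r a b → φ a ≤ φ b)
    (hAQ : ∀ w : ℕ → W, (∀ n, r (w (n + 1)) (w n) ∧ w (n + 1) ≠ w n) →
      (∀ n, φ (w (n + 1)) < φ (w n)) →
      Filter.Tendsto (fun n => φ (w (n + 1)) - infBelow r φ (w n)) Filter.atTop (nhds 0) →
      ∃ v, ∀ n, r v (w n))
    {w : W} (hw : ∃ w', r w' w) :
    ∃ wbar, r wbar w ∧ ∀ w', r w' wbar → φ w' = φ wbar := by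
  by_contra! hcon
  have hdrop : ∀ u, r u w → ∃ v, r v u ∧ φ v < φ u := fun u hu => by
    obtain ⟨v, hv, hne⟩ := hcon u hu
    exact ⟨v, hv, (hmono _ _ hv).lt_of_ne hne⟩
  have hstep : ∀ (n : ℕ) u, r u w → ∃ v, r v w ∧
      (r v u ∧ φ v < φ u ∧ φ v < infBelow r φ u + 1 / (n + 1)) := fun n u hu => by
    obtain ⟨v, hv, hlt⟩ := hdrop u hu
    obtain ⟨v', hv', hnear⟩ := exists_lt_and_lt_infBelow_add hbdd hv hlt Nat.one_div_pos_of_nat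
    exact ⟨v', trans_of r hv' hu, hv', hnear⟩
  obtain ⟨w₀, hw₀⟩ := hw
  obtain ⟨s, hs⟩ := exists_seq_of_forall_exists hstep hw₀
  have hdesc n := (hs n).2.1
  have hφdesc n := (hs n).2.2.1
  have hnear n := (hs n).2.2.2
  obtain ⟨v, hv⟩ := hAQ s (fun n => ⟨hdesc n, fun h => (hφdesc n).ne (congrArg φ h)⟩) hφdesc
    (tendsto_sub_infBelow_of_lt_add hbdd hdesc hnear)
  obtain ⟨w', hw', hlt⟩ := hdrop v (trans_of r (hv 0) (hs 0).1)
  exact hlt.not_ge (le_of_lowerBound_of_lt_infBelow_add hbdd hmono hnear hv hw')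

lemma eq_of_phi_eq_of_strictMono (hstrict : ∀ a b, r a b → a ≠ b → φ a < φ b) {a b : W}
    (hr : r a b) (heq : φ a = φ b) : a = b := by
  by_contra hne
  exact (hstrict a b hr hne).ne heq

end BrezisBrowder

open BrezisBrowder in
theorem statement4_general {W : Type*} (r : W → W → Prop) (htrans : Transitive r)
    (φ : W → ℝ) (hbdd : ∃ c : ℝ, ∀ w, c ≤ φ w)
    (hmono : ∀ a b, r a b → φ a ≤ φ b)
    (hAQ : ∀ w : ℕ → W, (∀ n, r (w (n + 1)) (w n) ∧ w (n + 1) ≠ w n) →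
      (∀ n, φ (w (n + 1)) < φ (w n)) →
      Filter.Tendsto (fun n => φ (w (n + 1)) - sInf (φ '' {v | r v (w n)}))
        Filter.atTop (nhds 0) →
      ∃ v, ∀ n, r v (w n)) :
    -- (i)
    (∀ w : W, (∃ w', r w' w) →
      ∃ wbar, r wbar w ∧ ∀ w', r w' wbar → φ w' = φ wbar)
    ∧
    -- (ii)
    ((∀ a b, r a b → a ≠ b → φ a < φ b) →
      ∀ w : W, (∃ w', r w' w) →
        ∃ wbar, r wbar w ∧ ∀ w', r w' wbar → w' = wbar) := by
  obtain ⟨c, hc⟩ := hbdd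
  have hbdd : BddBelow (Set.range φ) := ⟨c, by rintro _ ⟨w, rfl⟩; exact hc w⟩
  have : IsTrans W r := ⟨fun _ _ _ => @htrans _ _ _⟩
  have part_i w (hw : ∃ w', r w' w) := exists_phi_eq_below hbdd hmono hAQ hw
  refine ⟨part_i, fun hstrict w hw => ?_⟩
  obtain ⟨wbar, hwbar, hconst⟩ := part_i w hw
  exact ⟨wbar, hwbar, fun w' hw' => eq_of_phi_eq_of_strictMono hstrict hw' (hconst w' hw')⟩

/-- Brezis–Browder principle under the weaker condition (AQ). -/
theorem statement4 {W : Type*} [Nonempty W] (r : W → W → Prop) (htrans : Transitive r)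
    (φ : W → ℝ) (hbdd : ∃ c : ℝ, ∀ w, c ≤ φ w)
    (hmono : ∀ a b, r a b → φ a ≤ φ b)
    (hAQ : ∀ w : ℕ → W, (∀ n, r (w (n + 1)) (w n) ∧ w (n + 1) ≠ w n) →
      (∀ n, φ (w (n + 1)) < φ (w n)) →
      Filter.Tendsto (fun n => φ (w (n + 1)) - sInf (φ '' {v | r v (w n)}))
        Filter.atTop (nhds 0) →
      ∃ v, ∀ n, r v (w n)) :
    -- (i)
    (∀ w : W, (∃ w', r w' w) →
      ∃ wbar, r wbar w ∧ ∀ w', r w' wbar → φ w' = φ wbar)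
    ∧
    -- (ii)
    ((∀ a b, r a b → a ≠ b → φ a < φ b) →
      ∀ w : W, (∃ w', r w' w) →
        ∃ wbar, r wbar w ∧ ∀ w', r w' wbar → w' = wbar) :=
  statement4_general r htrans φ hbdd hmono hAQ
end

section
/- Let (X,d) be a metric space, Z a nonempty set, and 𝒜 ⊆ X × Z a nonempty set equipped with a preorder ≼ (a reflexive and transitive relation on 𝒜) satisfying condition (C0): for every ≼-decreasing sequence ((x_n,z_n))_{n≥1} ⊆ 𝒜, the sequence (x_n) is Cauchy in (X,d) and there exists (x,z) ∈ 𝒜 with (x,z) ≼ (x_n,z_n) for all n ≥ 1. Then for every (x,z) ∈ 𝒜 there exists (x̄,z̄) ∈ 𝒜 such that (x̄,z̄) ≼ (x,z) and every (x',z') ∈ 𝒜 with (x',z') ≼ (x̄,z̄) satisfies x' = x̄. -/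
/-!
Call the radius of `p = (x, z)` the supremum of `min (d(x', x)) 1` over all `(x', z') ≼ p`.
Starting from the given element, repeatedly pass to an element below the current one at
distance at least half the current radius. By (C0) the first coordinates form a Cauchy sequence,
so the radii tend to `0`, and (C0) also gives a lower bound `q̄` of the whole chain. Every element
below `q̄` lies below each term of the chain, so its first coordinate is within the radius of that
term; hence it has the same limit as the first coordinates of the chain, as does `q̄` itself.
-/

open Filter Topology

theorem CauchySeq.tendsto_dist_succ {X : Type*} [PseudoMetricSpace X] {x : ℕ → X}
    (hx : CauchySeq x) : Tendsto (fun n => dist (x (n + 1)) (x n)) atTop (𝓝 0) :=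
  (cauchySeq_iff_tendsto_dist_atTop_0.mp hx).comp
    (((tendsto_add_atTop_nat 1).prodMk tendsto_id).mono_right prod_atTop_atTop_eq.le)

theorem exists_seq_of_forall_mem_exists {α : Type*} {A : Set α} {R : α → α → Prop}
    (h : ∀ p ∈ A, ∃ q ∈ A, R q p) {p : α} (hp : p ∈ A) :
    ∃ u : ℕ → α, u 0 = p ∧ (∀ n, u n ∈ A) ∧ ∀ n, R (u (n + 1)) (u n) := by
  have : Nonempty α := ⟨p⟩
  choose! g hgA hg using h
  have hmem : ∀ n, g^[n] p ∈ A := by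
    intro n
    induction n with
    | zero => exact hp
    | succ n ih => rw [Function.iterate_succ_apply']; exact hgA _ ih
  refine ⟨fun n => g^[n] p, rfl, hmem, fun n => ?_⟩
  simpa only [Function.iterate_succ_apply'] using hg _ (hmem n)

namespace MinimalElement

variable {α X : Type*} [MetricSpace X] (f : α → X) (A : Set α) (r : α → α → Prop)

/-- Truncating at `1` keeps the supremum finite, and it does not matter once the radius is
below `1` (`dist_le_radius`). -/
noncomputable def radius (p : α) : ℝ :=
  sSup ((fun q => min (dist (f q) (f p)) 1) '' {q | q ∈ A ∧ r q p})

variable {f A r}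

theorem min_dist_le_radius {p q : α} (hq : q ∈ A) (hqp : r q p) :
    min (dist (f q) (f p)) 1 ≤ radius f A r p :=
  le_csSup ⟨1, by rintro _ ⟨_, _, rfl⟩; exact min_le_right _ _⟩ ⟨q, ⟨hq, hqp⟩, rfl⟩

theorem radius_nonneg {p q : α} (hq : q ∈ A) (hqp : r q p) : 0 ≤ radius f A r p :=
  le_trans (le_min dist_nonneg zero_le_one) (min_dist_le_radius (f := f) hq hqp)

theorem dist_le_radius {p q : α} (hq : q ∈ A) (hqp : r q p) (h : radius f A r p < 1) :
    dist (f q) (f p) ≤ radius f A r p := by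
  have := min_dist_le_radius (f := f) hq hqp
  rcases min_cases (dist (f q) (f p)) 1 with ⟨hmin, -⟩ | ⟨hmin, -⟩ <;> rw [hmin] at this
  · exact this
  · linarith

theorem exists_radius_le_two_mul_dist {p : α} (hp : p ∈ A) (hpp : r p p) :
    ∃ q ∈ A, r q p ∧ radius f A r p ≤ 2 * dist (f q) (f p) := by
  rcases le_or_gt (radius f A r p) 0 with h | h
  · exact ⟨p, hp, hpp, h.trans (by positivity)⟩
  obtain ⟨_, ⟨q, ⟨hq, hqp⟩, rfl⟩, hlt⟩ :=
    exists_lt_of_lt_csSup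
      (Set.Nonempty.image _ (⟨p, hp, hpp⟩ : {q | q ∈ A ∧ r q p}.Nonempty)) (half_lt_self h)
  have hlt : radius f A r p / 2 < min (dist (f q) (f p)) 1 := hlt
  exact ⟨q, hq, hqp, by linarith [min_le_left (dist (f q) (f p)) 1]⟩

theorem tendsto_of_radius_tendsto_zero {u : ℕ → α}
    (hu : Tendsto (fun n => radius f A r (u n)) atTop (𝓝 0))
    {s : α} (hs : s ∈ A) (hsu : ∀ n, r s (u n)) : Tendsto (f ∘ u) atTop (𝓝 (f s)) := by
  refine tendsto_iff_dist_tendsto_zero.mpr (squeeze_zero' (.of_forall fun _ => dist_nonneg) ?_ hu)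
  filter_upwards [hu.eventually (gt_mem_nhds zero_lt_one)] with n hn
  rw [Function.comp_apply, dist_comm]
  exact dist_le_radius hs (hsu n) hn

end MinimalElement

open MinimalElement in
theorem statement5_general {X Z : Type*} [MetricSpace X]
    (A : Set (X × Z))
    (r : X × Z → X × Z → Prop)
    (hrefl : ∀ p ∈ A, r p p)
    (htrans : ∀ p ∈ A, ∀ q ∈ A, ∀ s ∈ A, r p q → r q s → r p s)
    (hC0 : ∀ u : ℕ → X × Z, (∀ n, u n ∈ A) → (∀ n, r (u (n + 1)) (u n)) →
      CauchySeq (fun n => (u n).1) ∧ ∃ p ∈ A, ∀ n, r p (u n)) :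
    ∀ p ∈ A, ∃ q ∈ A, r q p ∧ ∀ s ∈ A, r s q → s.1 = q.1 := by
  intro p hp
  obtain ⟨u, rfl, huA, hu⟩ := exists_seq_of_forall_mem_exists
    (fun p hp => exists_radius_le_two_mul_dist (f := Prod.fst) hp (hrefl p hp)) hp
  obtain ⟨hcauchy, q, hqA, hq⟩ := hC0 u huA fun n => (hu n).1
  have hradius : Tendsto (fun n => radius Prod.fst A r (u n)) atTop (𝓝 0) := by
    have h := hcauchy.tendsto_dist_succ.const_mul 2
    rw [mul_zero] at h
    exact squeeze_zero (fun n => radius_nonneg (huA (n + 1)) (hu n).1) (fun n => (hu n).2) h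
  refine ⟨q, hqA, hq 0, fun s hs hsq => tendsto_nhds_unique
    (tendsto_of_radius_tendsto_zero hradius hs fun n => htrans s hs q hqA (u n) (huA n) hsq (hq n))
    (tendsto_of_radius_tendsto_zero hradius hqA hq)⟩

/-- Minimal element theorem on a product `X × Z` under condition (C0). -/
theorem statement5 {X Z : Type*} [MetricSpace X] [Nonempty Z]
    (A : Set (X × Z)) (hA : A.Nonempty)
    (r : X × Z → X × Z → Prop)
    (hrefl : ∀ p ∈ A, r p p)
    (htrans : ∀ p ∈ A, ∀ q ∈ A, ∀ s ∈ A, r p q → r q s → r p s)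
    (hC0 : ∀ u : ℕ → X × Z, (∀ n, u n ∈ A) → (∀ n, r (u (n + 1)) (u n)) →
      CauchySeq (fun n => (u n).1) ∧ ∃ p ∈ A, ∀ n, r p (u n)) :
    ∀ p ∈ A, ∃ q ∈ A, r q p ∧ ∀ s ∈ A, r s q → s.1 = q.1 :=
  statement5_general A r hrefl htrans hC0
end

section
/- Let (X,d) be a metric space, Z a nonempty set, and 𝒜 ⊆ X × Z a nonempty set equipped with a preorder ≼ (reflexive and transitive relation on 𝒜) satisfying condition (C'0): for every ≼-decreasing sequence ((x_n,z_n))_{n≥1} ⊆ 𝒜 there exists (x,z) ∈ 𝒜 such that x_n → x in (X,d) and (x,z) ≼ (x_n,z_n) for all n ≥ 1. Then for every (x,z) ∈ 𝒜 there exists (x̄,z̄) ∈ 𝒜 such that (x̄,z̄) ≼ (x,z) and every (x',z') ∈ 𝒜 with (x',z') ≼ (x̄,z̄) satisfies x' = x̄. -/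
/-! Measure how far an element of `A` is from being minimal by the largest truncated distance
`min 1 (dist s.1 p.1)` to its predecessors `s ≼ p`. Stepping each time to a predecessor that
realises at least half of this supremum gives a decreasing sequence; by (C'0) it has a lower
bound `q` to which the first coordinates converge. Any `s ≼ q` lies below every term, so its
truncated distance to the `n`-th term is at most twice the `n`-th step, which tends to `0`;
hence `s.1 = q.1`. -/

open Filter Topology

theorem Real.exists_forall_le_two_mul {α : Type*} {S : Set α} {f : α → ℝ} (hS : S.Nonempty)
    (hf : BddAbove (f '' S)) (hf₀ : ∀ s ∈ S, 0 ≤ f s) :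
    ∃ q ∈ S, ∀ s ∈ S, f s ≤ 2 * f q := by
  have hle : ∀ s ∈ S, f s ≤ sSup (f '' S) := fun s hs => le_csSup hf ⟨s, hs, rfl⟩
  rcases le_or_gt (sSup (f '' S)) 0 with hM | hM
  · obtain ⟨q, hq⟩ := hS
    exact ⟨q, hq, fun s hs => by linarith [hle s hs, hf₀ q hq]⟩
  · obtain ⟨_, ⟨q, hq, rfl⟩, hlt⟩ :=
      exists_lt_of_lt_csSup (hS.image f) (half_lt_self hM)
    exact ⟨q, hq, fun s hs => by linarith [hle s hs]⟩

theorem exists_truncDist_le_two_mul {X Z : Type*} [PseudoMetricSpace X] {A : Set (X × Z)}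
    {r : X × Z → X × Z → Prop} {p : X × Z} (hp : p ∈ A) (hpp : r p p) :
    ∃ q ∈ A, r q p ∧
      ∀ s ∈ A, r s p → min 1 (dist s.1 p.1) ≤ 2 * min 1 (dist q.1 p.1) := by
  obtain ⟨q, ⟨hqA, hqp⟩, hq⟩ := Real.exists_forall_le_two_mul (S := {s | s ∈ A ∧ r s p})
    (f := fun s => min 1 (dist s.1 p.1)) ⟨p, hp, hpp⟩
    ⟨1, by rintro _ ⟨s, -, rfl⟩; exact min_le_left _ _⟩
    (fun s _ => le_min zero_le_one dist_nonneg)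
  exact ⟨q, hqA, hqp, fun s hs hsp => hq s ⟨hs, hsp⟩⟩

theorem eq_of_truncDist_le_two_mul {X : Type*} [MetricSpace X] {u : ℕ → X} {x y : X}
    (hu : Tendsto u atTop (𝓝 x))
    (h : ∀ n, min 1 (dist y (u n)) ≤ 2 * min 1 (dist (u (n + 1)) (u n))) : y = x := by
  have hlhs : Tendsto (fun n => min 1 (dist y (u n))) atTop (𝓝 (min 1 (dist y x))) :=
    tendsto_const_nhds.min (tendsto_const_nhds.dist hu)
  have hrhs : Tendsto (fun n => 2 * min 1 (dist (u (n + 1)) (u n))) atTop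
      (𝓝 (2 * min 1 (dist x x))) :=
    (tendsto_const_nhds.min (((tendsto_add_atTop_iff_nat 1).2 hu).dist hu)).const_mul 2
  have hle := le_of_tendsto_of_tendsto' hlhs hrhs h
  rw [dist_self, min_eq_right zero_le_one, mul_zero, min_le_iff] at hle
  exact dist_le_zero.1 (hle.resolve_left (by norm_num))

theorem statement6_general {X Z : Type*} [MetricSpace X]
    (A : Set (X × Z))
    (r : X × Z → X × Z → Prop)
    (hrefl : ∀ p ∈ A, r p p)
    (htrans : ∀ p ∈ A, ∀ q ∈ A, ∀ s ∈ A, r p q → r q s → r p s)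
    (hC'0 : ∀ u : ℕ → X × Z, (∀ n, u n ∈ A) → (∀ n, r (u (n + 1)) (u n)) →
      ∃ p ∈ A, Filter.Tendsto (fun n => (u n).1) Filter.atTop (nhds p.1) ∧
        ∀ n, r p (u n)) :
    ∀ p ∈ A, ∃ q ∈ A, r q p ∧ ∀ s ∈ A, r s q → s.1 = q.1 := by
  intro p hp
  obtain ⟨u, rfl, huA, hu⟩ := exists_seq_of_forall_mem_exists
    (fun q hq => exists_truncDist_le_two_mul hq (hrefl q hq)) hp
  obtain ⟨q, hqA, hqlim, hqu⟩ := hC'0 u huA fun n => (hu n).1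
  refine ⟨q, hqA, hqu 0, fun s hs hsq => eq_of_truncDist_le_two_mul hqlim fun n => ?_⟩
  exact (hu n).2 s hs (htrans s hs q hqA (u n) (huA n) hsq (hqu n))

/-- Minimal element theorem on a product `X × Z` under condition (C'0). -/
theorem statement6 {X Z : Type*} [MetricSpace X] [Nonempty Z]
    (A : Set (X × Z)) (hA : A.Nonempty)
    (r : X × Z → X × Z → Prop)
    (hrefl : ∀ p ∈ A, r p p)
    (htrans : ∀ p ∈ A, ∀ q ∈ A, ∀ s ∈ A, r p q → r q s → r p s)
    (hC'0 : ∀ u : ℕ → X × Z, (∀ n, u n ∈ A) → (∀ n, r (u (n + 1)) (u n)) →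
      ∃ p ∈ A, Filter.Tendsto (fun n => (u n).1) Filter.atTop (nhds p.1) ∧
        ∀ n, r p (u n)) :
    ∀ p ∈ A, ∃ q ∈ A, r q p ∧ ∀ s ∈ A, r s q → s.1 = q.1 :=
  statement6_general A r hrefl htrans hC'0
end

section
/- Let (X,d) be a metric space preordered by a reflexive transitive relation ≼ satisfying condition (A0): every ≼-decreasing sequence (x_n)_{n≥1} ⊆ X is Cauchy and there exists x ∈ X with x ≼ x_n for all n ≥ 1. Then for every x ∈ X there exists x̄ ∈ X such that x̄ ≼ x and every x' ∈ X with x' ≼ x̄ satisfies x' = x̄. -/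
/-!
Brezis–Browder argument. Let `ρ y` be the supremum of `min 1 (d z y)` over `z ≼ y`. Starting from `x`,
step each time to some `z ≼ y` that realises at least half of `ρ y`. The resulting decreasing sequence is
Cauchy by (A0), so its steps, and with them the radii `ρ`, tend to `0`. A lower bound `x̄` of the sequence
given by (A0) and any `x' ≼ x̄` are then both limits of the sequence, hence equal.
-/

open Filter Topology

namespace BrezisBrowder

variable {X : Type*} [MetricSpace X] (r : X → X → Prop)

/-- The distance is truncated at `1` so that the supremum is finite. -/
noncomputable def lowerRadius (y : X) : ℝ :=
  ⨆ z : {z // r z y}, min 1 (dist (z : X) y)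

variable {r}

lemma lowerRadius_nonneg (y : X) : 0 ≤ lowerRadius r y :=
  Real.iSup_nonneg fun _ => le_min zero_le_one dist_nonneg

lemma min_one_dist_le_lowerRadius {y z : X} (hz : r z y) : min 1 (dist z y) ≤ lowerRadius r y :=
  le_ciSup (f := fun z : {z // r z y} => min 1 (dist (z : X) y))
    ⟨1, by rintro _ ⟨_, rfl⟩; exact min_le_left _ _⟩ ⟨z, hz⟩

lemma dist_le_lowerRadius {y z : X} (hz : r z y) (hlt : lowerRadius r y < 1) :
    dist z y ≤ lowerRadius r y := by
  have h := min_one_dist_le_lowerRadius hz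
  rcases le_total (dist z y) 1 with hd | hd
  · rwa [min_eq_right hd] at h
  · rw [min_eq_left hd] at h
    linarith

lemma exists_lowerRadius_le_two_mul_dist (hrefl : ∀ x, r x x) (y : X) :
    ∃ z, r z y ∧ lowerRadius r y ≤ 2 * dist z y := by
  rcases (lowerRadius_nonneg y).eq_or_lt with h0 | hpos
  · exact ⟨y, hrefl y, by rw [← h0, dist_self, mul_zero]⟩
  · have : Nonempty {z // r z y} := ⟨⟨y, hrefl y⟩⟩
    obtain ⟨⟨z, hz⟩, hlt⟩ := exists_lt_of_lt_ciSup (half_lt_self hpos)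
    have hlt : lowerRadius r y / 2 < min 1 (dist z y) := hlt
    exact ⟨z, hz, by linarith [min_le_right 1 (dist z y)]⟩

lemma tendsto_lowerRadius_zero {u : ℕ → X} (hu : CauchySeq u)
    (hstep : ∀ n, lowerRadius r (u n) ≤ 2 * dist (u (n + 1)) (u n)) :
    Tendsto (fun n => lowerRadius r (u n)) atTop (𝓝 0) := by
  have hdist : Tendsto (fun n => dist (u (n + 1)) (u n)) atTop (𝓝 0) :=
    (cauchySeq_iff_tendsto_dist_atTop_0.mp hu).comp
      (by rw [← prod_atTop_atTop_eq]; exact (tendsto_add_atTop_nat 1).prodMk tendsto_id)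
  exact squeeze_zero (fun n => lowerRadius_nonneg (u n)) hstep (by simpa using hdist.const_mul 2)

lemma tendsto_of_tendsto_lowerRadius_zero {u : ℕ → X}
    (hρ : Tendsto (fun n => lowerRadius r (u n)) atTop (𝓝 0)) {w : X} (hw : ∀ n, r w (u n)) :
    Tendsto u atTop (𝓝 w) := by
  refine tendsto_iff_dist_tendsto_zero.mpr (squeeze_zero' (Eventually.of_forall fun _ => dist_nonneg)
    ?_ hρ)
  filter_upwards [hρ.eventually (gt_mem_nhds one_pos)] with n hn
  rw [dist_comm]
  exact dist_le_lowerRadius (hw n) hn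

end BrezisBrowder

open BrezisBrowder in
/-- Minimal element theorem on a preordered metric space under condition (A0). -/
theorem statement7 {X : Type*} [MetricSpace X]
    (r : X → X → Prop) (hrefl : ∀ x, r x x) (htrans : Transitive r)
    (hA0 : ∀ x : ℕ → X, (∀ n, r (x (n + 1)) (x n)) →
      CauchySeq x ∧ ∃ v, ∀ n, r v (x n)) :
    ∀ x : X, ∃ xbar, r xbar x ∧ ∀ x', r x' xbar → x' = xbar := by
  intro x
  choose step hstep_le hstep_far using exists_lowerRadius_le_two_mul_dist (r := r) hrefl
  set u : ℕ → X := fun n => step^[n] x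
  have hsucc : ∀ n, u (n + 1) = step (u n) := fun n => Function.iterate_succ_apply' _ _ _
  obtain ⟨hcauchy, xbar, hxbar⟩ := hA0 u fun n => hsucc n ▸ hstep_le _
  have hρ := tendsto_lowerRadius_zero hcauchy fun n => hsucc n ▸ hstep_far _
  refine ⟨xbar, hxbar 0, fun x' hx' => ?_⟩
  exact tendsto_nhds_unique (tendsto_of_tendsto_lowerRadius_zero hρ fun n => htrans hx' (hxbar n))
    (tendsto_of_tendsto_lowerRadius_zero hρ hxbar)
end

section
/- Let (X,d) be a metric space preordered by a reflexive transitive relation ≼ satisfying condition (A'0): for every ≼-decreasing sequence (x_n)_{n≥1} ⊆ X there exists x ∈ X such that x_n → x and x ≼ x_n for all n ≥ 1. Then for every x ∈ X there exists x̄ ∈ X such that x̄ ≼ x and every x' ∈ X with x' ≼ x̄ satisfies x' = x̄. -/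
/-!
Let `ρ y` be the supremum of the truncated distances `min (d z y) 1` over `z ≼ y`. Starting
from `x`, repeatedly pass to some `z ≼ y` with `ρ y ≤ 2 d z y`. By (A'0) the resulting
decreasing sequence `uₙ` converges to some `v` lying below every `uₙ`, and `d(uₙ₊₁, uₙ) → 0`,
hence `ρ uₙ → 0`. Any `x' ≼ v` lies below every `uₙ`, so `d(x', uₙ) ≤ ρ uₙ → 0` and `uₙ` also
converges to `x'`; uniqueness of limits gives `x' = v`.
-/

open Filter Topology

section DescentRadius

variable {X : Type*} [PseudoMetricSpace X] (r : X → X → Prop)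

/-- Truncating at `1` keeps the set bounded, so `sSup` is a genuine supremum rather than the
junk value `0`. -/
noncomputable def descentRadius (y : X) : ℝ :=
  sSup ((fun z => min (dist z y) 1) '' {z | r z y})

variable {r}

theorem min_dist_le_descentRadius {y z : X} (h : r z y) :
    min (dist z y) 1 ≤ descentRadius r y :=
  le_csSup ⟨1, by rintro _ ⟨_, _, rfl⟩; exact min_le_right _ _⟩ ⟨z, h, rfl⟩

theorem dist_le_descentRadius {y z : X} (h : r z y) (hρ : descentRadius r y < 1) :
    dist z y ≤ descentRadius r y := by
  have hmin := min_dist_le_descentRadius h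
  rwa [min_eq_left (le_of_lt (by simpa [hρ.not_ge] using hmin.trans_lt hρ))] at hmin

theorem exists_descentRadius_le_two_mul_dist (hrefl : ∀ x, r x x) (y : X) :
    ∃ z, r z y ∧ descentRadius r y ≤ 2 * dist z y := by
  rcases le_or_gt (descentRadius r y) 0 with hρ | hρ
  · exact ⟨y, hrefl y, by simpa using hρ⟩
  · obtain ⟨_, ⟨z, hz, rfl⟩, hlt⟩ :=
      exists_lt_of_lt_csSup (Set.Nonempty.image _ (⟨y, hrefl y⟩ : {z | r z y}.Nonempty))
        (half_lt_self hρ)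
    exact ⟨z, hz, by linarith [min_le_left (dist z y) 1, show descentRadius r y / 2 < _ from hlt]⟩

theorem tendsto_of_forall_rel_of_descentRadius_le {u : ℕ → X} {v x' : X}
    (hu : Tendsto u atTop (𝓝 v))
    (hstep : ∀ n, descentRadius r (u n) ≤ 2 * dist (u (n + 1)) (u n))
    (hx' : ∀ n, r x' (u n)) : Tendsto u atTop (𝓝 x') := by
  have hgap : Tendsto (fun n => 2 * dist (u (n + 1)) (u n)) atTop (𝓝 0) := by
    simpa using ((hu.comp (tendsto_add_atTop_nat 1)).dist hu).const_mul 2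
  have hsmall : ∀ᶠ n in atTop, descentRadius r (u n) < 1 :=
    (hgap.eventually (gt_mem_nhds one_pos)).mono fun n hn => (hstep n).trans_lt hn
  rw [tendsto_iff_dist_tendsto_zero]
  refine squeeze_zero' (Eventually.of_forall fun _ => dist_nonneg) ?_ hgap
  filter_upwards [hsmall] with n hn
  rw [dist_comm]
  exact (dist_le_descentRadius (hx' n) hn).trans (hstep n)

end DescentRadius

/-- Minimal element theorem on a preordered metric space under condition (A'0)
(Liu–Ng). -/
theorem statement8 {X : Type*} [MetricSpace X]
    (r : X → X → Prop) (hrefl : ∀ x, r x x) (htrans : Transitive r)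
    (hA'0 : ∀ x : ℕ → X, (∀ n, r (x (n + 1)) (x n)) →
      ∃ v, Filter.Tendsto x Filter.atTop (nhds v) ∧ ∀ n, r v (x n)) :
    ∀ x : X, ∃ xbar, r xbar x ∧ ∀ x', r x' xbar → x' = xbar := by
  intro x
  choose f hfr hfρ using exists_descentRadius_le_two_mul_dist hrefl
  set u : ℕ → X := fun n => f^[n] x
  have hsucc : ∀ n, u (n + 1) = f (u n) := fun n => Function.iterate_succ_apply' f n x
  obtain ⟨v, hv, hvu⟩ := hA'0 u fun n => hsucc n ▸ hfr (u n)
  refine ⟨v, hvu 0, fun x' hx' => tendsto_nhds_unique ?_ hv⟩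
  exact tendsto_of_forall_rel_of_descentRadius_le hv (fun n => hsucc n ▸ hfρ (u n))
    fun n => htrans hx' (hvu n)
end

section
/- Let (Z,≼) be a preordered set and φ : Z → ℝ ∪ {±∞} a ≼-increasing function. For A₁, A₂ ⊆ Z define A₁ ≼ˡ A₂ iff for every z₂ ∈ A₂ there exists z₁ ∈ A₁ with z₁ ≼ z₂, and define A₁ ≼ˡ_φ A₂ iff [A₁ = A₂, or (A₁ ≼ˡ A₂ and inf φ(A₁) < inf φ(A₂))]. Then ≼ˡ_φ is a partial order on the power set of Z. Furthermore, if 𝒜 is a nonempty collection of subsets of Z such that every ≼ˡ-decreasing sequence in 𝒜 has a minorant in 𝒜 with respect to ≼ˡ, then for every A ∈ 𝒜 there exists Ā ∈ 𝒜 minimal with respect to ≼ˡ_φ such that Ā ≼ˡ_φ A; moreover, every A' ∈ 𝒜 with A' ≼ˡ Ā satisfies inf φ(A') = inf φ(Ā). -/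
/-!
Starting from `C ∈ 𝒜`, build a decreasing sequence `Aₙ₊₁ ≼ˡ Aₙ` in `𝒜` whose values `inf φ(Aₙ₊₁)`
come within `1/(n+1)` of the infimum of `inf φ` over the members of `𝒜` below `Aₙ`. To make these
infima real numbers, `inf φ` is first composed with an order isomorphism `EReal ≃o [0, 1]`.
A minorant `B ∈ 𝒜` of the sequence then satisfies `inf φ(A') = inf φ(B)` for every `A' ≼ˡ B` in `𝒜`,
and such a `B` is minimal for `≼ˡ_φ`. Either `A` itself has this property, or some `A'' ≼ˡ A` in `𝒜`
has `inf φ(A'') < inf φ(A)`, and the construction started at `A''` gives `B ≼ˡ_φ A`.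
-/

open Set

/-- The set relation `≼ˡ` induced by `r`. -/
def LowerLE {Z : Type*} (r : Z → Z → Prop) (A B : Set Z) : Prop :=
  ∀ z₂ ∈ B, ∃ z₁ ∈ A, r z₁ z₂

/-- `≼ˡ_φ` is `ScalarizedRel (LowerLE r) (fun A => sInf (φ '' A))`. -/
def ScalarizedRel {α β : Type*} [Preorder β] (R : α → α → Prop) (g : α → β) (A B : α) : Prop :=
  A = B ∨ (R A B ∧ g A < g B)

def HasDecreasingMinorants {α : Type*} (R : α → α → Prop) (𝒜 : Set α) : Prop :=
  ∀ u : ℕ → α, (∀ n, u n ∈ 𝒜) → (∀ n, R (u (n + 1)) (u n)) → ∃ B ∈ 𝒜, ∀ n, R B (u n)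

noncomputable def EReal.orderIsoUnitInterval : EReal ≃o Icc (0 : ℝ) 1 :=
  EReal.expOrderIso.trans ENNReal.orderIsoUnitIntervalBirational

namespace LowerLE

variable {Z : Type*} {r : Z → Z → Prop}

instance [Std.Refl r] : Std.Refl (LowerLE r) :=
  ⟨fun _ z hz => ⟨z, hz, refl_of r z⟩⟩

instance [IsTrans Z r] : IsTrans (Set Z) (LowerLE r) := by
  refine ⟨fun A B C hAB hBC z hz => ?_⟩
  obtain ⟨y, hy, hyz⟩ := hBC z hz
  obtain ⟨x, hx, hxy⟩ := hAB y hy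
  exact ⟨x, hx, trans_of r hxy hyz⟩

theorem sInf_image_le {β : Type*} [CompleteLattice β] {φ : Z → β}
    (hφ : ∀ a b, r a b → φ a ≤ φ b) {A B : Set Z} (h : LowerLE r A B) :
    sInf (φ '' A) ≤ sInf (φ '' B) := by
  refine le_sInf ?_
  rintro _ ⟨z, hz, rfl⟩
  obtain ⟨y, hy, hyz⟩ := h z hz
  exact (sInf_le (mem_image_of_mem φ hy)).trans (hφ _ _ hyz)

end LowerLE

namespace ScalarizedRel

variable {α β : Type*} [Preorder β] {R : α → α → Prop} {g : α → β}

instance : Std.Refl (ScalarizedRel R g) :=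
  ⟨fun _ => Or.inl rfl⟩

instance [IsTrans α R] : IsTrans α (ScalarizedRel R g) := by
  refine ⟨?_⟩
  rintro A B C (rfl | ⟨hAB, hgAB⟩) (rfl | ⟨hBC, hgBC⟩)
  · exact refl_of _ A
  · exact Or.inr ⟨hBC, hgBC⟩
  · exact Or.inr ⟨hAB, hgAB⟩
  · exact Or.inr ⟨trans_of R hAB hBC, hgAB.trans hgBC⟩

instance : Std.Antisymm (ScalarizedRel R g) := by
  refine ⟨?_⟩
  rintro A B (rfl | ⟨-, hgAB⟩) (h | ⟨-, hgBA⟩)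
  · rfl
  · rfl
  · exact h.symm
  · exact absurd hgAB hgBA.not_gt

theorem eq_of_forall_rel_eq {𝒜 : Set α} {B : α} (hB : ∀ A ∈ 𝒜, R A B → g A = g B)
    {A : α} (hA : A ∈ 𝒜) (h : ScalarizedRel R g A B) : A = B := by
  rcases h with h | ⟨hAB, hlt⟩
  · exact h
  · exact absurd (hB A hA hAB) hlt.ne

end ScalarizedRel

section Minimal

variable {α : Type*} {R : α → α → Prop} {𝒜 : Set α} [Std.Refl R]

theorem exists_rel_forall_lt_add {f : α → ℝ} (hbdd : BddBelow (f '' 𝒜))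
    {X : α} (hX : X ∈ 𝒜) {ε : ℝ} (hε : 0 < ε) :
    ∃ Y ∈ 𝒜, R Y X ∧ ∀ W ∈ 𝒜, R W X → f Y < f W + ε := by
  set T := f '' {W | W ∈ 𝒜 ∧ R W X}
  have hT : T.Nonempty := ⟨f X, X, ⟨hX, refl_of R X⟩, rfl⟩
  obtain ⟨_, ⟨Y, ⟨hY, hYX⟩, rfl⟩, hlt⟩ := exists_lt_of_csInf_lt hT (lt_add_of_pos_right _ hε)
  refine ⟨Y, hY, hYX, fun W hW hWX => hlt.trans_le ?_⟩
  gcongr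
  exact csInf_le (hbdd.mono (image_mono fun _ h => h.1)) ⟨W, ⟨hW, hWX⟩, rfl⟩

variable [IsTrans α R]

theorem HasDecreasingMinorants.exists_rel_forall_le {f : α → ℝ}
    (h𝒜 : HasDecreasingMinorants R 𝒜) (hf : ∀ a b, R a b → f a ≤ f b)
    (hbdd : BddBelow (f '' 𝒜)) {C : α} (hC : C ∈ 𝒜) :
    ∃ B ∈ 𝒜, R B C ∧ ∀ A ∈ 𝒜, R A B → f B ≤ f A := by
  have step (n : ℕ) (X : 𝒜) :
      ∃ Y : 𝒜, R Y X ∧ ∀ W ∈ 𝒜, R W X → f Y < f W + 1 / (n + 1) := by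
    obtain ⟨Y, hY, hYX, hlt⟩ :=
      exists_rel_forall_lt_add (R := R) hbdd X.2 (Nat.one_div_pos_of_nat (n := n))
    exact ⟨⟨Y, hY⟩, hYX, hlt⟩
  choose next hnext_rel hnext_lt using step
  let u : ℕ → 𝒜 := fun n => Nat.rec (motive := fun _ => 𝒜) ⟨C, hC⟩ next n
  have hu : ∀ n, R (u (n + 1)) (u n) := fun n => hnext_rel n (u n)
  obtain ⟨B, hB, hBu⟩ := h𝒜 (fun n => u n) (fun n => (u n).2) hu
  refine ⟨B, hB, hBu 0, fun A hA hAB => le_of_forall_pos_lt_add fun ε hε => ?_⟩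
  obtain ⟨n, hn⟩ := exists_nat_one_div_lt hε
  calc f B ≤ f (u (n + 1)) := hf _ _ (hBu (n + 1))
    _ < f A + 1 / (n + 1) := hnext_lt n (u n) A hA (trans_of R hAB (hBu n))
    _ < f A + ε := by gcongr

theorem HasDecreasingMinorants.exists_rel_forall_eq {g : α → EReal}
    (h𝒜 : HasDecreasingMinorants R 𝒜) (hg : ∀ a b, R a b → g a ≤ g b) {C : α} (hC : C ∈ 𝒜) :
    ∃ B ∈ 𝒜, R B C ∧ ∀ A ∈ 𝒜, R A B → g A = g B := by
  let e := EReal.orderIsoUnitInterval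
  have hbdd : BddBelow ((fun A => (e (g A) : ℝ)) '' 𝒜) :=
    ⟨0, by rintro _ ⟨A, -, rfl⟩; exact (e _).2.1⟩
  obtain ⟨B, hB, hBC, hmin⟩ := h𝒜.exists_rel_forall_le (f := fun A => (e (g A) : ℝ))
    (fun a b hab => by simpa using hg a b hab) hbdd hC
  exact ⟨B, hB, hBC, fun A hA hAB => (hg A B hAB).antisymm (by simpa using hmin A hA hAB)⟩

theorem HasDecreasingMinorants.exists_minimal_scalarizedRel {g : α → EReal}
    (h𝒜 : HasDecreasingMinorants R 𝒜) (hg : ∀ a b, R a b → g a ≤ g b) {A : α} (hA : A ∈ 𝒜) :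
    ∃ B ∈ 𝒜, ScalarizedRel R g B A ∧ (∀ A' ∈ 𝒜, ScalarizedRel R g A' B → A' = B) ∧
      ∀ A' ∈ 𝒜, R A' B → g A' = g B := by
  by_cases hstable : ∀ A' ∈ 𝒜, R A' A → g A' = g A
  · exact ⟨A, hA, refl_of _ A, fun _ => ScalarizedRel.eq_of_forall_rel_eq hstable, hstable⟩
  push Not at hstable
  obtain ⟨A'', hA'', hA''A, hne⟩ := hstable
  obtain ⟨B, hB, hBA'', hBstable⟩ := h𝒜.exists_rel_forall_eq hg hA''
  have hlt : g B < g A := (hg B A'' hBA'').trans_lt ((hg A'' A hA''A).lt_of_ne hne)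
  exact ⟨B, hB, Or.inr ⟨trans_of R hBA'' hA''A, hlt⟩,
    fun _ => ScalarizedRel.eq_of_forall_rel_eq hBstable, hBstable⟩

end Minimal

/-- Minimal element theorem for the set relation `≼ˡ` and its scalarized
partial order `≼ˡ_φ` on the power set of a preordered set `Z`.
`sInf` on `EReal` satisfies `sInf ∅ = +∞`, matching the convention. -/
theorem statement12 {Z : Type*} (r : Z → Z → Prop)
    (hrefl : ∀ z, r z z) (htrans : Transitive r)
    (φ : Z → EReal) (hmono : ∀ a b, r a b → φ a ≤ φ b)
    (rl : Set Z → Set Z → Prop)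
    (hrl : ∀ A B : Set Z, rl A B ↔ ∀ z₂ ∈ B, ∃ z₁ ∈ A, r z₁ z₂)
    (rlφ : Set Z → Set Z → Prop)
    (hrlφ : ∀ A B : Set Z,
      rlφ A B ↔ (A = B ∨ (rl A B ∧ sInf (φ '' A) < sInf (φ '' B)))) :
    -- ≼ˡ_φ is a partial order on 2^Z
    ((∀ A, rlφ A A) ∧ Transitive rlφ ∧ AntiSymmetric rlφ)
    ∧
    -- minimal element property within a family 𝒜 satisfying (Ab) wrt ≼ˡ
    (∀ 𝒜 : Set (Set Z), 𝒜.Nonempty →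
      (∀ u : ℕ → Set Z, (∀ n, u n ∈ 𝒜) → (∀ n, rl (u (n + 1)) (u n)) →
        ∃ B ∈ 𝒜, ∀ n, rl B (u n)) →
      ∀ A ∈ 𝒜, ∃ Abar ∈ 𝒜, rlφ Abar A ∧
        (∀ A' ∈ 𝒜, rlφ A' Abar → A' = Abar) ∧
        (∀ A' ∈ 𝒜, rl A' Abar → sInf (φ '' A') = sInf (φ '' Abar))) := by
  obtain rfl : rl = LowerLE r := funext₂ fun A B => propext (hrl A B)
  obtain rfl : rlφ = ScalarizedRel (LowerLE r) (fun A => sInf (φ '' A)) :=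
    funext₂ fun A B => propext (hrlφ A B)
  have : Std.Refl r := ⟨hrefl⟩
  have : IsTrans Z r := ⟨htrans⟩
  refine ⟨⟨refl_of _, fun _ _ _ => trans_of _, fun _ _ => antisymm_of _⟩, ?_⟩
  intro 𝒜 _ h𝒜 A hA
  exact HasDecreasingMinorants.exists_minimal_scalarizedRel h𝒜
    (fun _ _ => LowerLE.sInf_image_le hmono) hA
end

section
/- Let Y be a topological additive group. If S, T ⊆ Y are nonempty and S is sequentially compact, then the sequential closure of S + T equals S + (sequential closure of T). In particular, if Y is a real topological vector space, K ⊆ Y is a convex cone, and H ⊆ K is nonempty and sequentially compact, then 0 ∉ seq-cl(H + K) if and only if H ∩ (−seq-cl K) = ∅. -/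
open scoped Pointwise
open Filter

/-!
If `s n + t n → y` with `s n ∈ S` and `t n ∈ T`, sequential compactness of `S` gives a
subsequence `s (φ n) → a ∈ S`; then `t (φ n) = (s (φ n) + t (φ n)) - s (φ n) → y - a`, so
`y = a + (y - a) ∈ S + seqClosure T`. The reverse inclusion is continuity of addition.
For the cone statement, `0 ∉ H + C` just says that `H` and `-C` are disjoint.
-/

section SeqClosureAdd

variable {G : Type*} [TopologicalSpace G] [AddGroup G]

theorem add_seqClosure_subset [ContinuousAdd G] (S T : Set G) :
    S + seqClosure T ⊆ seqClosure (S + T) := by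
  rintro _ ⟨a, ha, b, ⟨u, hu, hlim⟩, rfl⟩
  exact ⟨fun n => a + u n, fun n => Set.add_mem_add ha (hu n), tendsto_const_nhds.add hlim⟩

theorem IsSeqCompact.seqClosure_add_subset [IsTopologicalAddGroup G] {S : Set G}
    (hS : IsSeqCompact S) (T : Set G) : seqClosure (S + T) ⊆ S + seqClosure T := by
  rintro y ⟨u, hu, hlim⟩
  choose s hs t ht hst using fun n => Set.mem_add.mp (hu n)
  obtain ⟨a, haS, φ, hφ, hs_lim⟩ := hS hs
  have ht_eq : (fun n => t (φ n)) = fun n => -s (φ n) + u (φ n) := by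
    funext n
    rw [← hst, neg_add_cancel_left]
  have ht_lim : Tendsto (fun n => t (φ n)) atTop (nhds (-a + y)) := by
    rw [ht_eq]
    exact hs_lim.neg.add (hlim.comp hφ.tendsto_atTop)
  exact ⟨a, haS, -a + y, ⟨_, fun n => ht (φ n), ht_lim⟩, add_neg_cancel_left a y⟩

theorem IsSeqCompact.seqClosure_add [IsTopologicalAddGroup G] {S : Set G}
    (hS : IsSeqCompact S) (T : Set G) : seqClosure (S + T) = S + seqClosure T :=
  (hS.seqClosure_add_subset T).antisymm (add_seqClosure_subset S T)

end SeqClosureAdd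

theorem Set.zero_notMem_add_iff {G : Type*} [AddGroup G] (s t : Set G) :
    (0 : G) ∉ s + t ↔ s ∩ -t = ∅ := by
  rw [← sub_neg_eq_add, Set.zero_mem_sub_iff, not_not, Set.disjoint_iff_inter_eq_empty]

theorem statement13_general {Y : Type*} [TopologicalSpace Y] [AddCommGroup Y]
    [IsTopologicalAddGroup Y] :
    (∀ S T : Set Y, S.Nonempty → T.Nonempty → IsSeqCompact S →
      seqClosure (S + T) = S + seqClosure T)
    ∧
    (∀ [Module ℝ Y] [ContinuousSMul ℝ Y], ∀ K H : Set Y,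
      K + K ⊆ K → (∀ t : ℝ, 0 < t → t • K ⊆ K) →
      H ⊆ K → H.Nonempty → IsSeqCompact H →
      ((0 : Y) ∉ seqClosure (H + K) ↔ H ∩ (-seqClosure K) = ∅)) := by
  refine ⟨fun S T _ _ hS => hS.seqClosure_add T, fun K H _ _ _ _ hH => ?_⟩
  rw [hH.seqClosure_add K, Set.zero_notMem_add_iff]

/-- In a Hausdorff topological additive group, the sequential closure of `S + T`
with `S` sequentially compact equals `S + seqClosure T`; in particular, for a
real topological vector space with a convex cone `K` and a nonempty
sequentially compact `H ⊆ K`, `0 ∉ seqClosure (H + K) ↔ H ∩ (-seqClosure K) = ∅`. -/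
theorem statement13 {Y : Type*} [TopologicalSpace Y] [AddCommGroup Y]
    [IsTopologicalAddGroup Y] [T2Space Y] :
    (∀ S T : Set Y, S.Nonempty → T.Nonempty → IsSeqCompact S →
      seqClosure (S + T) = S + seqClosure T)
    ∧
    (∀ [Module ℝ Y] [ContinuousSMul ℝ Y], ∀ K H : Set Y,
      K + K ⊆ K → (∀ t : ℝ, 0 < t → t • K ⊆ K) →
      H ⊆ K → H.Nonempty → IsSeqCompact H →
      ((0 : Y) ∉ seqClosure (H + K) ↔ H ∩ (-seqClosure K) = ∅)) :=
  statement13_general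
end

section
/- Let Y be a real separated topological vector space, and let C ⊆ Y be a proper convex cone and K ⊆ Y a convex cone with K ⊆ C. If H ⊆ Y is a nonempty sequentially compact set with H ⊆ interior(C), then 0 does not belong to the sequential closure of H + K. -/
open scoped Pointwise

open Filter Topology Set

/-!
If `a n + b n → 0` with `a n ∈ H` and `b n ∈ K`, sequential compactness of `H` gives a
subsequence `a (φ n) → h ∈ H`, so `b (φ n) → -h` and `-h ∈ closure K ⊆ closure C`. Since
`interior C + closure C = interior C + C ⊆ interior C`, this puts `0 = h + (-h)` in the interior
of `C`; a cone that is a neighbourhood of `0` absorbs every vector, hence is the whole space.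
-/

section

variable {Y : Type*} [AddCommGroup Y] [TopologicalSpace Y] [IsTopologicalAddGroup Y]

theorem IsSeqCompact.exists_neg_mem_closure_of_zero_mem_seqClosure_add {H S : Set Y}
    (hH : IsSeqCompact H) (h0 : (0 : Y) ∈ seqClosure (H + S)) :
    ∃ h ∈ H, -h ∈ closure S := by
  obtain ⟨x, hx, hx0⟩ := h0
  choose a ha b hb hab using fun n => mem_add.mp (hx n)
  obtain ⟨h, hh, φ, hφ, ha_lim⟩ := hH ha
  have hb_lim : Tendsto (fun n => b (φ n)) atTop (𝓝 (0 - h)) := by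
    have hb_eq : (fun n => b (φ n)) = fun n => x (φ n) - a (φ n) := by
      funext n
      rw [← hab (φ n), add_sub_cancel_left]
    rw [hb_eq]
    exact (hx0.comp hφ.tendsto_atTop).sub ha_lim
  rw [zero_sub] at hb_lim
  exact ⟨h, hh, mem_closure_of_tendsto hb_lim (Eventually.of_forall fun n => hb (φ n))⟩

theorem zero_mem_interior_of_add_subset {C : Set Y} (hC : C + C ⊆ C) {h : Y}
    (hh : h ∈ interior C) (hh' : -h ∈ closure C) : (0 : Y) ∈ interior C := by
  have h_sum : h + -h ∈ interior C + C := by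
    rw [← isOpen_interior.add_closure C]
    exact add_mem_add hh hh'
  rw [add_neg_cancel] at h_sum
  exact interior_mono hC (subset_interior_add_left h_sum)

end

theorem eq_univ_of_zero_mem_interior_of_smul_subset {Y : Type*} [AddCommGroup Y] [Module ℝ Y]
    [TopologicalSpace Y] [ContinuousSMul ℝ Y] {C : Set Y}
    (hC : ∀ t : ℝ, 0 < t → t • C ⊆ C) (h0 : (0 : Y) ∈ interior C) : C = univ := by
  refine eq_univ_of_forall fun y => ?_
  have h_abs : Absorbent ℝ C := absorbent_nhds_zero (mem_interior_iff_mem_nhds.mp h0)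
  obtain ⟨t, hty, ht⟩ := ((absorbent_iff_eventually_nhdsNE_zero.mp h_abs y).filter_mono
    (nhdsGT_le_nhdsNE 0) |>.and self_mem_nhdsWithin).exists
  have hy := hC t⁻¹ (inv_pos.mpr ht) (smul_mem_smul_set hty)
  rwa [smul_smul, inv_mul_cancel₀ ht.ne', one_smul] at hy

theorem statement15_general {Y : Type*} [AddCommGroup Y] [Module ℝ Y]
    [TopologicalSpace Y] [IsTopologicalAddGroup Y] [ContinuousSMul ℝ Y]
    (C : Set Y) (hCproper : C ≠ Set.univ)
    (hC1 : C + C ⊆ C) (hC2 : ∀ t : ℝ, 0 < t → t • C ⊆ C)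
    (K : Set Y)
    (hKC : K ⊆ C)
    (H : Set Y) (hHcpt : IsSeqCompact H)
    (hHC : H ⊆ interior C) :
    (0 : Y) ∉ seqClosure (H + K) := by
  intro h0
  obtain ⟨h, hh, hh'⟩ := hHcpt.exists_neg_mem_closure_of_zero_mem_seqClosure_add h0
  have h_int : (0 : Y) ∈ interior C :=
    zero_mem_interior_of_add_subset hC1 (hHC hh) (closure_mono hKC hh')
  exact hCproper (eq_univ_of_zero_mem_interior_of_smul_subset hC2 h_int)

/-- If `C` is a proper convex cone, `K ⊆ C` a convex cone, and `H` a nonempty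
sequentially compact set contained in the interior of `C`, then
`0 ∉ seqClosure (H + K)`. -/
theorem statement15 {Y : Type*} [AddCommGroup Y] [Module ℝ Y]
    [TopologicalSpace Y] [IsTopologicalAddGroup Y] [ContinuousSMul ℝ Y] [T2Space Y]
    (C : Set Y) (hCproper : C ≠ Set.univ)
    (hC1 : C + C ⊆ C) (hC2 : ∀ t : ℝ, 0 < t → t • C ⊆ C)
    (K : Set Y) (hK1 : K + K ⊆ K) (hK2 : ∀ t : ℝ, 0 < t → t • K ⊆ K)
    (hKC : K ⊆ C)
    (H : Set Y) (hH : H.Nonempty) (hHcpt : IsSeqCompact H)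
    (hHC : H ⊆ interior C) :
    (0 : Y) ∉ seqClosure (H + K) :=
  statement15_general C hCproper hC1 hC2 K hKC H hHcpt hHC
end

section
/- Let Y be a real separated topological vector space (with the uniformity induced by its additive group structure) and let E ⊆ Y be a nonempty sequentially compact convex set. Then E is cs-complete: for all sequences (λ_n)_{n≥1} ⊆ [0,∞) with ∑_{n≥1} λ_n = 1 and (y_n)_{n≥1} ⊆ E such that the sequence of partial sums (∑_{m=1}^{n} λ_m y_m)_{n≥1} is Cauchy, the series ∑_{n≥1} λ_n y_n converges and its sum belongs to E. -/
/-!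
Writing the `n`-th partial sum as `Λₙ • zₙ`, where `Λₙ` is the `n`-th partial sum of the
weights and `zₙ ∈ E` is the corresponding center of mass, sequential compactness gives a
subsequence `zₙₖ → s ∈ E`; since `Λₙ → 1`, the partial sums converge to `s` along that
subsequence, and a Cauchy sequence with a convergent subsequence converges.
-/

open Filter Topology

theorem Finset.sum_smul_centerMass {R E ι : Type*} [Field R] [AddCommGroup E] [Module R E]
    {t : Finset ι} {w : ι → R} (z : ι → E) (hw : ∑ i ∈ t, w i ≠ 0) :
    (∑ i ∈ t, w i) • t.centerMass w z = ∑ i ∈ t, w i • z i := by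
  rw [Finset.centerMass, smul_smul, mul_inv_cancel₀ hw, one_smul]

theorem Convex.exists_mem_sum_smul_eq_sum_smul {R E ι : Type*} [Field R] [LinearOrder R]
    [IsStrictOrderedRing R] [AddCommGroup E] [Module R E] {s : Set E} (hs : Convex R s)
    (hne : s.Nonempty) {t : Finset ι} {w : ι → R} {z : ι → E} (hw : ∀ i ∈ t, 0 ≤ w i)
    (hz : ∀ i ∈ t, z i ∈ s) : ∃ x ∈ s, ∑ i ∈ t, w i • z i = (∑ i ∈ t, w i) • x := by
  by_cases hsum : ∑ i ∈ t, w i = 0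
  · obtain ⟨x, hx⟩ := hne
    have hw0 : ∀ i ∈ t, w i = 0 := (Finset.sum_eq_zero_iff_of_nonneg hw).mp hsum
    refine ⟨x, hx, ?_⟩
    rw [hsum, zero_smul]
    exact Finset.sum_eq_zero fun i hi => by rw [hw0 i hi, zero_smul]
  · exact ⟨t.centerMass w z, hs.centerMass_mem hw (lt_of_le_of_ne (Finset.sum_nonneg hw)
      (Ne.symm hsum)) hz, (Finset.sum_smul_centerMass z hsum).symm⟩

theorem IsSeqCompact.exists_mem_subseq_tendsto_smul_of_tendsto_one {M Y : Type*} [Monoid M]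
    [TopologicalSpace M] [TopologicalSpace Y] [MulAction M Y] [ContinuousSMul M Y] {E : Set Y}
    (hE : IsSeqCompact E) {c : ℕ → M} (hc : Tendsto c atTop (𝓝 1)) {z : ℕ → Y}
    (hz : ∀ n, z n ∈ E) :
    ∃ s ∈ E, ∃ φ : ℕ → ℕ, StrictMono φ ∧
      Tendsto (fun k => c (φ k) • z (φ k)) atTop (𝓝 s) := by
  obtain ⟨s, hsE, φ, hφ, hlim⟩ := hE hz
  refine ⟨s, hsE, φ, hφ, ?_⟩
  simpa only [one_smul, Function.comp_def] using (hc.comp hφ.tendsto_atTop).smul hlim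

theorem statement16_general {Y : Type*} [AddCommGroup Y] [Module ℝ Y]
    [UniformSpace Y] [ContinuousSMul ℝ Y]
    (E : Set Y) (hEcpt : IsSeqCompact E) (hEconv : Convex ℝ E) :
    ∀ (l : ℕ → ℝ) (y : ℕ → Y), (∀ n, 0 ≤ l n) → (∀ n, y n ∈ E) →
      Filter.Tendsto (fun n => ∑ m ∈ Finset.range n, l m) Filter.atTop (nhds 1) →
      CauchySeq (fun n => ∑ m ∈ Finset.range n, l m • y m) →
      ∃ s ∈ E, Filter.Tendsto (fun n => ∑ m ∈ Finset.range n, l m • y m)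
        Filter.atTop (nhds s) := by
  intro l y hl hy hsum hcauchy
  choose z hzE hsum_eq using fun n : ℕ =>
    hEconv.exists_mem_sum_smul_eq_sum_smul ⟨y 0, hy 0⟩ (t := Finset.range n)
      (fun i _ => hl i) (fun i _ => hy i)
  obtain ⟨s, hsE, φ, hφ, hlim⟩ :=
    hEcpt.exists_mem_subseq_tendsto_smul_of_tendsto_one hsum hzE
  refine ⟨s, hsE, tendsto_nhds_of_cauchySeq_of_subseq hcauchy hφ.tendsto_atTop ?_⟩
  simpa only [Function.comp_def, hsum_eq] using hlim

/-- A nonempty sequentially compact convex subset of a real separated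
topological vector space (with the uniformity of its additive group) is
cs-complete. -/
theorem statement16 {Y : Type*} [AddCommGroup Y] [Module ℝ Y]
    [UniformSpace Y] [IsUniformAddGroup Y] [ContinuousSMul ℝ Y] [T2Space Y]
    (E : Set Y) (hE : E.Nonempty) (hEcpt : IsSeqCompact E) (hEconv : Convex ℝ E) :
    ∀ (l : ℕ → ℝ) (y : ℕ → Y), (∀ n, 0 ≤ l n) → (∀ n, y n ∈ E) →
      Filter.Tendsto (fun n => ∑ m ∈ Finset.range n, l m) Filter.atTop (nhds 1) →
      CauchySeq (fun n => ∑ m ∈ Finset.range n, l m • y m) →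
      ∃ s ∈ E, Filter.Tendsto (fun n => ∑ m ∈ Finset.range n, l m • y m)
        Filter.atTop (nhds s) :=
  statement16_general E hEcpt hEconv
end

section
/- Let (X,d) be a metric space, Y a real vector space, K ⊆ Y a convex cone containing 0, and H ⊆ K a nonempty set such that H + K is convex. Let ((x_n,A_n))_{n≥1} ⊆ X × 2^Y be a ≼_H-decreasing sequence (i.e. A_n ⊆ A_{n+1} + d(x_n,x_{n+1})·H + K for all n ≥ 1) with A_1 ≠ ∅. If there exist α > 0 and an infinite set P ⊆ ℕ\{0} such that A_1 ⊄ A_n + α·H + K for all n ∈ P, then ∑_{n≥1} d(x_n,x_{n+1}) ≤ α; in particular, (x_n)_{n≥1} is a Cauchy sequence. -/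
/-!
Iterating the relation `A n ⊆ A (n+1) + d n • H + K`, and merging `s • H + t • H` into
`(s + t) • H + K` by `K`-convexity of `H`, gives `A 0 ⊆ A n + (∑_{i<n} d i) • H + K`.
Since `H ⊆ K`, a multiple `s • H` is absorbed into `t • H + K` whenever `t ≤ s`; so for
`n ∈ P` the partial sum must stay below `α`, and `P` being unbounded bounds every partial sum.
-/

open scoped Pointwise

open Finset

section ConeArithmetic

variable {Y : Type*} [AddCommGroup Y] [Module ℝ Y] {K H : Set Y}

lemma smul_subset_self_of_nonneg (hK0 : (0 : Y) ∈ K) (hK2 : ∀ t : ℝ, 0 < t → t • K ⊆ K)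
    {r : ℝ} (hr : 0 ≤ r) : r • K ⊆ K := by
  rcases hr.eq_or_lt with rfl | hr
  · exact (Set.zero_smul_set_subset K).trans (Set.zero_subset.2 hK0)
  · exact hK2 r hr

lemma smul_add_smul_subset_add_smul (hK0 : (0 : Y) ∈ K)
    (hK2 : ∀ t : ℝ, 0 < t → t • K ⊆ K)
    (hconv : Convex ℝ (H + K)) {s t : ℝ} (hs : 0 ≤ s) (ht : 0 ≤ t) :
    s • H + t • H ⊆ (s + t) • H + K := by
  have hHsub : H ⊆ H + K := Set.subset_add_left H hK0
  calc s • H + t • H ⊆ s • (H + K) + t • (H + K) := by gcongr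
    _ = (s + t) • H + (s + t) • K := by rw [← hconv.add_smul hs ht, smul_add]
    _ ⊆ (s + t) • H + K :=
      Set.add_subset_add_left (smul_subset_self_of_nonneg hK0 hK2 (add_nonneg hs ht))

lemma smul_subset_smul_add_of_le (hK0 : (0 : Y) ∈ K) (hK2 : ∀ t : ℝ, 0 < t → t • K ⊆ K)
    (hHK : H ⊆ K) {s t : ℝ} (hts : t ≤ s) : s • H ⊆ t • H + K := by
  rintro _ ⟨h, hh, rfl⟩
  refine ⟨t • h, Set.smul_mem_smul_set hh, (s - t) • h, ?_, ?_⟩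
  · exact smul_subset_self_of_nonneg hK0 hK2 (sub_nonneg.2 hts) (Set.smul_mem_smul_set (hHK hh))
  · simp only [← add_smul, add_sub_cancel]

lemma subset_add_sum_smul_add (hH : H.Nonempty) (hK0 : (0 : Y) ∈ K) (hK1 : K + K ⊆ K)
    (hK2 : ∀ t : ℝ, 0 < t → t • K ⊆ K) (hconv : Convex ℝ (H + K))
    {A : ℕ → Set Y} {r : ℕ → ℝ}
    (hr : ∀ n, 0 ≤ r n) (hstep : ∀ n, A n ⊆ A (n + 1) + r n • H + K) (n : ℕ) :
    A 0 ⊆ A n + (∑ i ∈ range n, r i) • H + K := by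
  induction n with
  | zero =>
    rw [sum_range_zero, Set.zero_smul_set hH, add_zero]
    exact Set.subset_add_left _ hK0
  | succ n ih =>
    set S := ∑ i ∈ range n, r i
    rw [sum_range_succ]
    calc A 0 ⊆ A (n + 1) + r n • H + K + S • H + K := ih.trans (by gcongr; exact hstep n)
      _ = A (n + 1) + (S • H + r n • H) + (K + K) := by abel
      _ ⊆ A (n + 1) + ((S + r n) • H + K) + K := by
          refine Set.add_subset_add (Set.add_subset_add_left ?_) hK1
          exact smul_add_smul_subset_add_smul hK0 hK2 hconv (sum_nonneg fun i _ => hr i) (hr n)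
      _ = A (n + 1) + (S + r n) • H + (K + K) := by abel
      _ ⊆ A (n + 1) + (S + r n) • H + K := by gcongr

end ConeArithmetic

theorem statement17_general {X Y : Type*} [MetricSpace X] [AddCommGroup Y] [Module ℝ Y]
    (K : Set Y) (hK0 : (0 : Y) ∈ K)
    (hK1 : K + K ⊆ K) (hK2 : ∀ t : ℝ, 0 < t → t • K ⊆ K)
    (H : Set Y) (hH : H.Nonempty) (hHK : H ⊆ K) (hHKconv : Convex ℝ (H + K))
    (x : ℕ → X) (A : ℕ → Set Y)
    (hdecr : ∀ n, A n ⊆ A (n + 1) + dist (x n) (x (n + 1)) • H + K)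
    (α : ℝ) (P : Set ℕ) (hP : P.Infinite)
    (hnsub : ∀ n ∈ P, ¬ A 0 ⊆ A n + α • H + K) :
    Summable (fun n => dist (x n) (x (n + 1))) ∧
      (∑' n, dist (x n) (x (n + 1))) ≤ α ∧ CauchySeq x := by
  have hchain := subset_add_sum_smul_add hH hK0 hK1 hK2 hHKconv (fun _ => dist_nonneg) hdecr
  have hlt : ∀ n ∈ P, ∑ i ∈ range n, dist (x i) (x (i + 1)) < α := by
    refine fun n hn => not_le.1 fun hle => hnsub n hn ((hchain n).trans ?_)
    calc A n + (∑ i ∈ range n, dist (x i) (x (i + 1))) • H + K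
          ⊆ A n + (α • H + K) + K :=
          Set.add_subset_add_right
            (Set.add_subset_add_left (smul_subset_smul_add_of_le hK0 hK2 hHK hle))
      _ = A n + α • H + (K + K) := by abel
      _ ⊆ A n + α • H + K := by gcongr
  have hbound : ∀ n, ∑ i ∈ range n, dist (x i) (x (i + 1)) ≤ α := fun n => by
    obtain ⟨m, hm, hnm⟩ := hP.exists_gt n
    exact (sum_le_sum_of_subset_of_nonneg (range_subset_range.2 hnm.le)
      fun _ _ _ => dist_nonneg).trans (hlt m hm).le
  have hsum := summable_of_sum_range_le (fun _ => dist_nonneg) hbound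
  exact ⟨hsum, hsum.tsum_le_of_sum_range_le hbound, cauchySeq_of_summable_dist hsum⟩

/-- If a `≼_H`-decreasing sequence `((x_n, A_n))` has `A_1 ⊄ A_n + α•H + K` for
infinitely many `n`, then `∑ d(x_n, x_{n+1}) ≤ α`; in particular `(x_n)` is
Cauchy. -/
theorem statement17 {X Y : Type*} [MetricSpace X] [AddCommGroup Y] [Module ℝ Y]
    (K : Set Y) (hK0 : (0 : Y) ∈ K)
    (hK1 : K + K ⊆ K) (hK2 : ∀ t : ℝ, 0 < t → t • K ⊆ K)
    (H : Set Y) (hH : H.Nonempty) (hHK : H ⊆ K) (hHKconv : Convex ℝ (H + K))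
    (x : ℕ → X) (A : ℕ → Set Y) (hA1 : (A 0).Nonempty)
    (hdecr : ∀ n, A n ⊆ A (n + 1) + dist (x n) (x (n + 1)) • H + K)
    (α : ℝ) (hα : 0 < α) (P : Set ℕ) (hP : P.Infinite)
    (hnsub : ∀ n ∈ P, ¬ A 0 ⊆ A n + α • H + K) :
    Summable (fun n => dist (x n) (x (n + 1))) ∧
      (∑' n, dist (x n) (x (n + 1))) ≤ α ∧ CauchySeq x :=
  statement17_general K hK0 hK1 hK2 H hH hHK hHKconv x A hdecr α P hP hnsub
end

section
/- Let Y be a real vector space, K ⊆ Y a convex cone containing 0, H ⊆ K a nonempty set, and E ⊆ Y nonempty. Set Ẽ := E ∩ (−⋃_{t>0}(tH + K)). If there exists a linear functional z* : Y → ℝ with z* ≥ 0 on K such that inf z*(Ẽ) > −∞ and inf z*(H) > 0, then there exists ε > 0 such that E ∩ (−εH − K) = ∅. -/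
open scoped Pointwise

theorem le_neg_mul_of_mem_neg_smul_add {Y : Type*} [AddCommGroup Y] [Module ℝ Y]
    (f : Y →ₗ[ℝ] ℝ) {H K : Set Y} {δ ε : ℝ} (hε : 0 ≤ ε)
    (hH : ∀ h ∈ H, δ ≤ f h) (hK : ∀ k ∈ K, 0 ≤ f k) {y : Y} (hy : y ∈ -(ε • H + K)) :
    f y ≤ -(ε * δ) := by
  obtain ⟨_, ⟨h, hh, rfl⟩, k, hk, hsum⟩ := Set.mem_neg.mp hy
  have hfy : f y = -(ε * f h + f k) := by
    rw [← neg_neg y, ← hsum]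
    simp
  nlinarith [hH h hh, hK k hk]

theorem neg_smul_add_subset_neg_iUnion {Y : Type*} [AddCommGroup Y] [Module ℝ Y]
    (H K : Set Y) {ε : ℝ} (hε : 0 < ε) :
    -(ε • H + K) ⊆ -(⋃ t ∈ Set.Ioi (0 : ℝ), (t • H + K)) :=
  Set.neg_subset_neg.mpr (Set.subset_biUnion_of_mem (u := fun t : ℝ => t • H + K) hε)

theorem statement18_general {Y : Type*} [AddCommGroup Y] [Module ℝ Y]
    (K : Set Y)
    (H : Set Y) (hHK : H ⊆ K)
    (E : Set Y)
    (zs : Y →ₗ[ℝ] ℝ) (hzs : ∀ y ∈ K, 0 ≤ zs y)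
    (hEt : BddBelow ((fun y => zs y) ''
      (E ∩ (-(⋃ t ∈ Set.Ioi (0 : ℝ), (t • H + K))))))
    (hHpos : 0 < sInf ((fun y => zs y) '' H)) :
    ∃ ε : ℝ, 0 < ε ∧ E ∩ (-(ε • H + K)) = ∅ := by
  obtain ⟨m, hm⟩ := hEt
  set δ := sInf ((fun y => zs y) '' H)
  have hδH : ∀ h ∈ H, δ ≤ zs h := fun h hh =>
    csInf_le ⟨0, by rintro _ ⟨x, hx, rfl⟩; exact hzs x (hHK hx)⟩ ⟨h, hh, rfl⟩
  -- `ε` is chosen so that `z*` is below `-(|m| + 1) < m` on `-(εH + K)`.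
  set ε := (|m| + 1) / δ
  have hε : 0 < ε := by positivity
  have hεδ : ε * δ = |m| + 1 := div_mul_cancel₀ _ hHpos.ne'
  refine ⟨ε, hε, Set.eq_empty_iff_forall_notMem.mpr ?_⟩
  rintro y ⟨hyE, hy⟩
  have hmy : m ≤ zs y := hm ⟨y, ⟨hyE, neg_smul_add_subset_neg_iUnion H K hε hy⟩, rfl⟩
  have hyδ := le_neg_mul_of_mem_neg_smul_add zs hε.le hδH hzs hy
  linarith [neg_abs_le m]

/-- If some linear functional `z*`, nonnegative on `K`, is bounded below on
`Ẽ := E ∩ (−⋃_{t>0}(tH + K))` and has `inf z*(H) > 0`, then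
`E ∩ (−εH − K) = ∅` for some `ε > 0`. -/
theorem statement18 {Y : Type*} [AddCommGroup Y] [Module ℝ Y]
    (K : Set Y) (hK0 : (0 : Y) ∈ K)
    (hK1 : K + K ⊆ K) (hK2 : ∀ t : ℝ, 0 < t → t • K ⊆ K)
    (H : Set Y) (hH : H.Nonempty) (hHK : H ⊆ K)
    (E : Set Y) (hE : E.Nonempty)
    (zs : Y →ₗ[ℝ] ℝ) (hzs : ∀ y ∈ K, 0 ≤ zs y)
    (hEt : BddBelow ((fun y => zs y) ''
      (E ∩ (-(⋃ t ∈ Set.Ioi (0 : ℝ), (t • H + K))))))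
    (hHpos : 0 < sInf ((fun y => zs y) '' H)) :
    ∃ ε : ℝ, 0 < ε ∧ E ∩ (-(ε • H + K)) = ∅ :=
  statement18_general K H hHK E zs hzs hEt hHpos
end

section
/- Let (X,d) be a metric space, Y a real vector space, K ⊆ Y a proper convex cone containing 0, and H ⊆ K\(−K) a nonempty set such that H + K is convex. Let 𝒜 ⊆ X × 2^Y be nonempty with A ≠ ∅ for every A in the projection of 𝒜 to 2^Y, ordered by the preorder ≼_H given by (x₁,A₁) ≼_H (x₂,A₂) iff A₂ ⊆ A₁ + d(x₁,x₂)·H + K. Assume (𝒜,≼_H) satisfies condition (C1): every ≼_H-decreasing sequence ((x_n,A_n))_{n≥1} ⊆ 𝒜 with (x_n) Cauchy has a minorant in 𝒜 with respect to ≼_H. Suppose (x₀,A₀) ∈ 𝒜 and ε > 0 are such that A₀ ⊄ A + εH + K for every A in the projection of 𝒜 to 2^Y. Then there exists (x̄,Ā) ∈ 𝒜 such that: (x̄,Ā) ≼_H (x₀,A₀); every (x',A') ∈ 𝒜 with (x',A') ≼_H (x̄,Ā) satisfies x' = x̄; and d(x̄,x₀) < ε. -/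
open scoped Pointwise

/-!
The relation `≼_H` is a preorder: convexity of `H + K` gives `sH + tH ⊆ (s + t)H + K`.
On the elements below `(x₀, A₀)`, `φ (x, A) := sup {t ≥ 0 | A₀ ⊆ A + tH + K}` is a
potential for it: `(x', A') ≼_H (x, A)` forces `φ (x, A) + d(x', x) ≤ φ (x', A')`, and the
hypothesis on `ε` bounds `φ` by `ε`. The theorem is then an instance of the Brezis–Browder
ordering principle: choosing each `u (n + 1)` below `u n` with `φ` within `1 / (n + 1)` of
its supremum there gives a chain along which `d` is dominated by the increments of the
bounded `φ`, hence a Cauchy chain, and a minorant of it provided by (C1) admits only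
elements with the same first coordinate below it.
-/

namespace SetShift

variable {Y : Type*} [AddCommGroup Y] [Module ℝ Y] {K H A B C : Set Y}

theorem smul_subset_of_nonneg (hK0 : (0 : Y) ∈ K) (hK2 : ∀ t : ℝ, 0 < t → t • K ⊆ K)
    {t : ℝ} (ht : 0 ≤ t) : t • K ⊆ K := by
  rcases ht.eq_or_lt with rfl | ht
  · rw [Set.zero_smul_set ⟨0, hK0⟩]
    exact Set.zero_subset.2 hK0
  · exact hK2 t ht

theorem smul_subset_smul_add_of_le (hK0 : (0 : Y) ∈ K) (hK2 : ∀ t : ℝ, 0 < t → t • K ⊆ K)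
    (hHK : H ⊆ K) {s t : ℝ} (hst : s ≤ t) : t • H ⊆ s • H + K :=
  calc t • H = (s + (t - s)) • H := by rw [add_sub_cancel]
    _ ⊆ s • H + (t - s) • H := Set.add_smul_subset _ _ _
    _ ⊆ s • H + K := Set.add_subset_add_left <|
      (Set.smul_set_mono hHK).trans (smul_subset_of_nonneg hK0 hK2 (sub_nonneg.2 hst))

theorem smul_add_smul_subset (hK0 : (0 : Y) ∈ K) (hK2 : ∀ t : ℝ, 0 < t → t • K ⊆ K)
    (hconv : Convex ℝ (H + K)) {a b : ℝ} (ha : 0 ≤ a) (hb : 0 ≤ b) :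
    a • H + b • H ⊆ (a + b) • H + K :=
  calc a • H + b • H ⊆ a • (H + K) + b • (H + K) :=
        Set.add_subset_add (Set.smul_set_mono (Set.subset_add_left H hK0))
          (Set.smul_set_mono (Set.subset_add_left H hK0))
    _ = (a + b) • H + (a + b) • K := by rw [← hconv.add_smul ha hb, smul_add]
    _ ⊆ (a + b) • H + K :=
        Set.add_subset_add_left (smul_subset_of_nonneg hK0 hK2 (add_nonneg ha hb))

theorem subset_add_smul_add_trans (hK0 : (0 : Y) ∈ K) (hK1 : K + K ⊆ K)
    (hK2 : ∀ t : ℝ, 0 < t → t • K ⊆ K) (hconv : Convex ℝ (H + K)) {a b : ℝ} (ha : 0 ≤ a)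
    (hb : 0 ≤ b) (hAB : B ⊆ A + a • H + K) (hBC : C ⊆ B + b • H + K) :
    C ⊆ A + (a + b) • H + K :=
  calc C ⊆ A + a • H + K + b • H + K :=
        hBC.trans (Set.add_subset_add_right (Set.add_subset_add_right hAB))
    _ = A + (a • H + b • H) + (K + K) := by abel
    _ ⊆ A + ((a + b) • H + K) + K :=
        Set.add_subset_add (Set.add_subset_add_left (smul_add_smul_subset hK0 hK2 hconv ha hb)) hK1
    _ = A + (a + b) • H + (K + K) := by abel
    _ ⊆ A + (a + b) • H + K := Set.add_subset_add_left hK1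

theorem subset_add_smul_add_of_le (hK0 : (0 : Y) ∈ K) (hK1 : K + K ⊆ K)
    (hK2 : ∀ t : ℝ, 0 < t → t • K ⊆ K) (hHK : H ⊆ K) {s t : ℝ} (hst : s ≤ t)
    (h : B ⊆ A + t • H + K) : B ⊆ A + s • H + K :=
  calc B ⊆ A + (s • H + K) + K :=
        h.trans (Set.add_subset_add_right (Set.add_subset_add_left
          (smul_subset_smul_add_of_le hK0 hK2 hHK hst)))
    _ = A + s • H + (K + K) := by abel
    _ ⊆ A + s • H + K := Set.add_subset_add_left hK1

theorem subset_add_zero_smul_add (hH : H.Nonempty) (hK0 : (0 : Y) ∈ K) :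
    A ⊆ A + (0 : ℝ) • H + K := by
  rw [Set.zero_smul_set hH, add_zero]
  exact Set.subset_add_left A hK0

def marginSet (K H A₀ A : Set Y) : Set ℝ := {t | 0 ≤ t ∧ A₀ ⊆ A + t • H + K}

theorem mem_upperBounds_marginSet (hK0 : (0 : Y) ∈ K) (hK1 : K + K ⊆ K)
    (hK2 : ∀ t : ℝ, 0 < t → t • K ⊆ K) (hHK : H ⊆ K) {A₀ : Set Y} {ε : ℝ}
    (hε : ¬ A₀ ⊆ A + ε • H + K) : ε ∈ upperBounds (marginSet K H A₀ A) :=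
  fun _ ht => le_of_not_ge fun hεt =>
    hε (subset_add_smul_add_of_le hK0 hK1 hK2 hHK hεt ht.2)

theorem sSup_marginSet_add_le (hK0 : (0 : Y) ∈ K) (hK1 : K + K ⊆ K)
    (hK2 : ∀ t : ℝ, 0 < t → t • K ⊆ K) (hconv : Convex ℝ (H + K)) {A₀ : Set Y}
    (hA : (marginSet K H A₀ A).Nonempty) (hB : BddAbove (marginSet K H A₀ B)) {d : ℝ}
    (hd : 0 ≤ d) (hAB : A ⊆ B + d • H + K) :
    sSup (marginSet K H A₀ A) + d ≤ sSup (marginSet K H A₀ B) := by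
  rw [← le_sub_iff_add_le]
  refine csSup_le hA fun t ⟨ht, hA₀⟩ =>
    le_sub_iff_add_le.2 (le_csSup hB ⟨add_nonneg ht hd, ?_⟩)
  rw [add_comm t d]
  exact subset_add_smul_add_trans hK0 hK1 hK2 hconv hd ht hAB hA₀

end SetShift

section BrezisBrowder

variable {α X : Type*}

theorem cauchySeq_of_dist_le_sub [PseudoMetricSpace X] {x : ℕ → X} {a : ℕ → ℝ}
    (ha : BddAbove (Set.range a)) (h : ∀ n, dist (x n) (x (n + 1)) ≤ a (n + 1) - a n) :
    CauchySeq x := by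
  obtain ⟨M, hM⟩ := ha
  refine cauchySeq_of_summable_dist <|
    summable_of_sum_range_le (c := M - a 0) (fun _ => dist_nonneg) fun n => ?_
  calc ∑ i ∈ Finset.range n, dist (x i) (x (i + 1))
      ≤ ∑ i ∈ Finset.range n, (a (i + 1) - a i) := Finset.sum_le_sum fun i _ => h i
    _ = a n - a 0 := Finset.sum_range_sub a n
    _ ≤ M - a 0 := by linarith [hM ⟨n, rfl⟩]

theorem exists_rel_forall_le_add {r : α → α → Prop} {S : Set α} {φ : α → ℝ}
    (hrefl : ∀ p, r p p) (hbdd : BddAbove (φ '' S)) {p : α} (hp : p ∈ S) {δ : ℝ}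
    (hδ : 0 < δ) :
    ∃ q ∈ S, r q p ∧ ∀ q' ∈ S, r q' p → φ q' ≤ φ q + δ := by
  have hT : (φ '' {q ∈ S | r q p}).Nonempty := ⟨φ p, p, ⟨hp, hrefl p⟩, rfl⟩
  obtain ⟨-, ⟨q, hq, rfl⟩, hlt⟩ := exists_lt_of_lt_csSup hT (sub_lt_self _ hδ)
  refine ⟨q, hq.1, hq.2, fun q' hq' hq'p => ?_⟩
  have : φ q' ≤ sSup (φ '' {q ∈ S | r q p}) :=
    le_csSup (hbdd.mono (Set.image_mono (Set.sep_subset _ _))) ⟨q', ⟨hq', hq'p⟩, rfl⟩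
  linarith

theorem exists_rel_forall_rel_eq_of_dist_le_sub [MetricSpace X] {r : α → α → Prop}
    {S : Set α} (f : α → X) (φ : α → ℝ) (hrefl : ∀ p, r p p)
    (htrans : ∀ p q s, r p q → r q s → r p s)
    (hdist : ∀ p ∈ S, ∀ q ∈ S, r q p → dist (f q) (f p) ≤ φ q - φ p)
    (hbdd : BddAbove (φ '' S))
    (hC1 : ∀ u : ℕ → α, (∀ n, u n ∈ S) → (∀ n, r (u (n + 1)) (u n)) →
      CauchySeq (fun n => f (u n)) → ∃ p ∈ S, ∀ n, r p (u n))
    {p₀ : α} (hp₀ : p₀ ∈ S) : ∃ p ∈ S, r p p₀ ∧ ∀ q ∈ S, r q p → f q = f p := by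
  choose! next hnextS hnext_rel hnext_le using fun (n : ℕ) p (hp : p ∈ S) =>
    exists_rel_forall_le_add hrefl hbdd hp (Nat.one_div_pos_of_nat (n := n) (α := ℝ))
  let u : ℕ → α := fun n => Nat.rec p₀ (fun n p => next n p) n
  have huS : ∀ n, u n ∈ S := fun n => Nat.rec hp₀ (fun n ih => hnextS n _ ih) n
  have hu_rel : ∀ n, r (u (n + 1)) (u n) := fun n => hnext_rel n _ (huS n)
  have hφu : BddAbove (Set.range (fun n => φ (u n))) :=
    hbdd.mono (Set.range_subset_iff.2 fun n => Set.mem_image_of_mem φ (huS n))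
  have hcauchy : CauchySeq (fun n => f (u n)) := cauchySeq_of_dist_le_sub hφu fun n => by
    rw [dist_comm]
    exact hdist _ (huS n) _ (huS (n + 1)) (hu_rel n)
  obtain ⟨p, hpS, hp⟩ := hC1 u huS hu_rel hcauchy
  refine ⟨p, hpS, hp 0, fun q hqS hqp => eq_of_forall_dist_le fun δ hδ => ?_⟩
  obtain ⟨n, hn⟩ := exists_nat_one_div_lt hδ
  have hq_le : φ q ≤ φ (u (n + 1)) + 1 / (n + 1) :=
    hnext_le n _ (huS n) q hqS (htrans _ _ _ hqp (hp n))
  have hp_ge := hdist _ (huS (n + 1)) p hpS (hp (n + 1))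
  have hqp_le := hdist p hpS q hqS hqp
  linarith [dist_nonneg (x := f p) (y := f (u (n + 1)))]

end BrezisBrowder

open SetShift

theorem statement19_general {X Y : Type*} [MetricSpace X] [AddCommGroup Y] [Module ℝ Y]
    (K : Set Y) (hK0 : (0 : Y) ∈ K)
    (hK1 : K + K ⊆ K) (hK2 : ∀ t : ℝ, 0 < t → t • K ⊆ K)
    (H : Set Y) (hH : H.Nonempty) (hHK : H ⊆ K \ (-K)) (hHKconv : Convex ℝ (H + K))
    (relH : X × Set Y → X × Set Y → Prop)
    (hrelH : ∀ p q : X × Set Y, relH p q ↔ q.2 ⊆ p.2 + dist p.1 q.1 • H + K)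
    (𝒜 : Set (X × Set Y))
    (hC1 : ∀ u : ℕ → X × Set Y, (∀ n, u n ∈ 𝒜) → (∀ n, relH (u (n + 1)) (u n)) →
      CauchySeq (fun n => (u n).1) → ∃ p ∈ 𝒜, ∀ n, relH p (u n))
    (x₀ : X) (A₀ : Set Y) (h₀ : (x₀, A₀) ∈ 𝒜)
    (ε : ℝ)
    (hbd : ∀ p ∈ 𝒜, ¬ A₀ ⊆ p.2 + ε • H + K) :
    ∃ p ∈ 𝒜, relH p (x₀, A₀) ∧
      (∀ q ∈ 𝒜, relH q p → q.1 = p.1) ∧ dist p.1 x₀ < ε := by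
  have hHK' : H ⊆ K := hHK.trans Set.sdiff_subset
  have hrefl (p : X × Set Y) : relH p p := by
    rw [hrelH, dist_self]
    exact subset_add_zero_smul_add hH hK0
  have htrans (p q s : X × Set Y) (hpq : relH p q) (hqs : relH q s) : relH p s := by
    rw [hrelH] at *
    exact subset_add_smul_add_of_le hK0 hK1 hK2 hHK' (dist_triangle _ _ _)
      (subset_add_smul_add_trans hK0 hK1 hK2 hHKconv dist_nonneg dist_nonneg hpq hqs)
  let S := {p ∈ 𝒜 | relH p (x₀, A₀)}
  let φ (p : X × Set Y) : ℝ := sSup (marginSet K H A₀ p.2)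
  have hmargin (p) (hp : p ∈ S) : dist p.1 x₀ ∈ marginSet K H A₀ p.2 :=
    ⟨dist_nonneg, (hrelH _ _).1 hp.2⟩
  have hupper (p) (hp : p ∈ 𝒜) : ε ∈ upperBounds (marginSet K H A₀ p.2) :=
    mem_upperBounds_marginSet hK0 hK1 hK2 hHK' (hbd p hp)
  have hpot : ∀ p ∈ S, ∀ q ∈ S, relH q p → dist q.1 p.1 ≤ φ q - φ p :=
    fun p hp q hq hqp => le_sub_iff_add_le'.2 <| sSup_marginSet_add_le hK0 hK1 hK2 hHKconv
      ⟨_, hmargin p hp⟩ ⟨ε, hupper q hq.1⟩ dist_nonneg ((hrelH q p).1 hqp)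
  have hφ : BddAbove (φ '' S) :=
    ⟨ε, Set.forall_mem_image.2 fun p hp => csSup_le ⟨_, hmargin p hp⟩ (hupper p hp.1)⟩
  have hC1S (u : ℕ → X × Set Y) (hu : ∀ n, u n ∈ S) (hdec : ∀ n, relH (u (n + 1)) (u n))
      (hcauchy : CauchySeq (fun n => (u n).1)) : ∃ p ∈ S, ∀ n, relH p (u n) :=
    (hC1 u (fun n => (hu n).1) hdec hcauchy).imp
      fun p ⟨hp𝒜, hp⟩ => ⟨⟨hp𝒜, htrans _ _ _ (hp 0) (hu 0).2⟩, hp⟩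
  obtain ⟨p, ⟨hp𝒜, hp₀⟩, -, hmin⟩ := exists_rel_forall_rel_eq_of_dist_le_sub
    Prod.fst φ hrefl htrans hpot hφ hC1S ⟨h₀, hrefl _⟩
  refine ⟨p, hp𝒜, hp₀, fun q hq hqp => hmin q ⟨hq, htrans _ _ _ hqp hp₀⟩ hqp, ?_⟩
  by_contra! hεp
  exact hbd p hp𝒜 (subset_add_smul_add_of_le hK0 hK1 hK2 hHK' hεp ((hrelH _ _).1 hp₀))

/-- Ekeland-type minimal element theorem for the set relation `≼_H` on
`X × 2^Y` under condition (C1) and the boundedness condition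
`A₀ ⊄ A + εH + K`. -/
theorem statement19 {X Y : Type*} [MetricSpace X] [AddCommGroup Y] [Module ℝ Y]
    (K : Set Y) (hKproper : K ≠ Set.univ) (hK0 : (0 : Y) ∈ K)
    (hK1 : K + K ⊆ K) (hK2 : ∀ t : ℝ, 0 < t → t • K ⊆ K)
    (H : Set Y) (hH : H.Nonempty) (hHK : H ⊆ K \ (-K)) (hHKconv : Convex ℝ (H + K))
    (relH : X × Set Y → X × Set Y → Prop)
    (hrelH : ∀ p q : X × Set Y, relH p q ↔ q.2 ⊆ p.2 + dist p.1 q.1 • H + K)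
    (𝒜 : Set (X × Set Y)) (h𝒜ne : 𝒜.Nonempty)
    (h𝒜 : ∀ p ∈ 𝒜, p.2.Nonempty)
    (hC1 : ∀ u : ℕ → X × Set Y, (∀ n, u n ∈ 𝒜) → (∀ n, relH (u (n + 1)) (u n)) →
      CauchySeq (fun n => (u n).1) → ∃ p ∈ 𝒜, ∀ n, relH p (u n))
    (x₀ : X) (A₀ : Set Y) (h₀ : (x₀, A₀) ∈ 𝒜)
    (ε : ℝ) (hε : 0 < ε)
    (hbd : ∀ p ∈ 𝒜, ¬ A₀ ⊆ p.2 + ε • H + K) :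
    ∃ p ∈ 𝒜, relH p (x₀, A₀) ∧
      (∀ q ∈ 𝒜, relH q p → q.1 = p.1) ∧ dist p.1 x₀ < ε :=
  statement19_general K hK0 hK1 hK2 H hH hHK hHKconv relH hrelH 𝒜 hC1 x₀ A₀ h₀ ε hbd
end
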